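/- arXiv:math/0505330 — 3 statements merged into one kernel-verified Lean document; each statement's English description precedes it below -/
import Mathlib

section
/- Every finite ranked meet semi-lattice with the diamond property satisfies the Kruskal–Katona inequalities 0 ≤ ∂_k(f_k) ≤ f_{k−1} for all k ≥ 0 (Wegner's theorem). -/
/-!
Wegner's argument. Pick an atom `a` and split the poset into the elements above `a` and the
rest; both pieces again satisfy the hypotheses. Sending an element `y ≥ a` of rank `k + 2` to a
lower cover avoiding `a` (which exists by the diamond property) is injective, since two such `y`
sharing a cover `w` would have `w` as their meet, while their meet lies above `a`. By induction
both pieces are realised by families of finite sets with small shadows; replacing them by colex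
initial segments of the same sizes (Kruskal–Katona), adjoining a new largest element to the sets
of the upper piece and taking the union yields `f_{k+1}` sets whose shadow has at most `f_k`
sets, because the shadow of one initial segment and the other initial segment are nested. The
shadow of an initial segment is at least `∂_k` of its size, by recursion on its largest element.
-/

/-- The largest `m` with `C(m, k) ≤ n` (the leading term of the greedy cascade
representation). -/
def cascadeTop (k n : ℕ) : ℕ := Nat.findGreatest (fun m => Nat.choose m k ≤ n) (n + k + 1)

/-- `delSym k n = ∂^k(n)`: for `n > 0` with `k`-cascade representation
`n = C(n_k, k) + ... + C(n_i, i)` (computed greedily), `∂^k(n) = C(n_k - 1, k - 1)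
+ ... + C(n_i - 1, i - 1)`, and `∂^k(0) = 0`. -/
def delSym : ℕ → ℕ → ℕ
  | _, 0 => 0
  | 0, _ + 1 => 1
  | k + 1, n + 1 =>
    Nat.choose (cascadeTop (k + 1) (n + 1) - 1) k +
      delSym k (n + 1 - Nat.choose (cascadeTop (k + 1) (n + 1)) (k + 1))

/-- Auxiliary for Kruskal–Katona shadow: `delKKaux k n` is
`C(n_k, k-1) + ... + C(n_i, i-1)` for the `k`-cascade representation of `n`. -/
def delKKaux : ℕ → ℕ → ℕ
  | _, 0 => 0
  | 0, _ + 1 => 1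
  | k + 1, n + 1 =>
    Nat.choose (cascadeTop (k + 1) (n + 1)) k +
      delKKaux k (n + 1 - Nat.choose (cascadeTop (k + 1) (n + 1)) (k + 1))

/-- `delKK k n = ∂_k(n)`, computed via the `(k+1)`-cascade representation of `n`. -/
def delKK (k n : ℕ) : ℕ := delKKaux (k + 1) n

/-- The rank function is compatible with the covering relation. -/
def CoverRank {P : Type*} [PartialOrder P] (rk : P → ℕ) : Prop :=
  ∀ a b : P, a ⋖ b → rk b = rk a + 1

/-- The rank function is strictly monotone (the poset is graded). -/
def RankStrictMono {P : Type*} [PartialOrder P] (rk : P → ℕ) : Prop :=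
  ∀ a b : P, a < b → rk a < rk b

/-- The diamond property: every interval of rank 2 contains at least two
intermediate elements. -/
def DiamondProp {P : Type*} [PartialOrder P] (rk : P → ℕ) : Prop :=
  ∀ x y : P, x < y → rk y = rk x + 2 →
    ∃ a b : P, a ≠ b ∧ a ∈ Set.Ioo x y ∧ b ∈ Set.Ioo x y

/-- The parallelogram property (Definition of the paper): for every `x̂` and every
`y > x̂`, if the chain `x̂ = x 0 ⋖ x 1 ⋖ ... ⋖ x r` (`r > 0`) equals the closed
interval `[x̂, x r]`, is maximal w.r.t. inclusion among chain-intervals above `x̂`,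
and `r` is less than the rank of `y` in `P(x̂)`, then whenever `x i < y` and
`x (i+1) ≰ y` for some `0 < i ≤ r` (interpreting, for `i = r`, the latter as
`[x̂, y]` is not a chain), there exists `y'` with `x̂ ≤ y'`, `y' ⋖ y`,
`x (i-1) < y'` and `¬ x i ≤ y'`. -/
def ParallelogramProp {P : Type*} [PartialOrder P] (rk : P → ℕ) : Prop :=
  ∀ (xh y : P) (r : ℕ) (x : ℕ → P),
    xh < y → 0 < r → x 0 = xh →
    (∀ j, j < r → x j ⋖ x (j + 1)) →
    Set.Icc xh (x r) = {p | ∃ j ≤ r, p = x j} →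
    (∀ z : P, x r < z → ¬ IsChain (· ≤ ·) (Set.Icc xh z)) →
    r < rk y - rk xh →
    ∀ i, 0 < i → i ≤ r → x i < y →
      ((i < r ∧ ¬ x (i + 1) ≤ y) ∨ (i = r ∧ ¬ IsChain (· ≤ ·) (Set.Icc xh y))) →
      ∃ y' : P, xh ≤ y' ∧ y' ⋖ y ∧ x (i - 1) < y' ∧ ¬ x i ≤ y'

lemma le_choose_succ_add (m j : ℕ) : m ≤ m.choose (j + 1) + j := by
  induction m with
  | zero => omega
  | succ m ih =>
    rw [Nat.choose_succ_succ']
    rcases Nat.lt_or_ge m j with h | h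
    · omega
    · have := Nat.choose_pos h
      omega

lemma cascadeTop_eq {j m n : ℕ} (h₁ : m.choose (j + 1) ≤ n) (h₂ : n < (m + 1).choose (j + 1)) :
    cascadeTop (j + 1) n = m := by
  rw [cascadeTop, Nat.findGreatest_eq_iff]
  refine ⟨by have := le_choose_succ_add m j; omega, fun _ => h₁, fun m' hm' _ hle => ?_⟩
  have := Nat.choose_le_choose (j + 1) (show m + 1 ≤ m' by omega)
  omega

lemma delKKaux_zero (j : ℕ) : delKKaux j 0 = 0 := by
  cases j <;> rfl

lemma delKK_zero (k : ℕ) : delKK k 0 = 0 :=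
  delKKaux_zero _

lemma delKKaux_succ_eq {j m n : ℕ} (hn : 0 < n) (h₁ : m.choose (j + 1) ≤ n)
    (h₂ : n < (m + 1).choose (j + 1)) :
    delKKaux (j + 1) n = m.choose j + delKKaux j (n - m.choose (j + 1)) := by
  obtain ⟨n, rfl⟩ := Nat.exists_eq_succ_of_ne_zero hn.ne'
  rw [delKKaux, cascadeTop_eq h₁ h₂]

lemma delKK_zero_left {n : ℕ} (hn : 0 < n) : delKK 0 n = 1 := by
  rw [delKK, delKKaux_succ_eq (m := n) hn (by simp) (by simp)]
  simp [delKKaux_zero]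

lemma delKK_choose {k m : ℕ} (h : k + 1 ≤ m) : delKK k (m.choose (k + 1)) = m.choose k := by
  have hpos := Nat.choose_pos (show k ≤ m by omega)
  rw [delKK, delKKaux_succ_eq (m := m) (Nat.choose_pos h) le_rfl
    (by rw [Nat.choose_succ_succ']; omega), Nat.sub_self, delKKaux_zero, add_zero]

/-- A colex initial segment of `(k + 2)`-sets through `N` consists of all `(k + 2)`-subsets of
`range N` and `d ≤ C(N, k + 1)` sets containing `N`; this is the matching step of the cascade. -/
lemma delKK_succ_choose_add_le {N k d : ℕ} (hd : d ≤ N.choose (k + 1)) :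
    delKK (k + 1) (N.choose (k + 2) + d) ≤ N.choose (k + 1) + delKK k d := by
  rcases Nat.eq_zero_or_pos (N.choose (k + 2) + d) with h0 | hpos
  · rw [h0, delKK_zero]
    omega
  rcases hd.lt_or_eq with hd | rfl
  · have hsucc : (N + 1).choose (k + 1 + 1) = N.choose (k + 1) + N.choose (k + 2) :=
      Nat.choose_succ_succ' N (k + 1)
    rw [delKK, delKKaux_succ_eq hpos le_self_add (by omega),
      Nat.add_sub_cancel_left]
    rfl
  · have hN : k + 1 ≤ N := by
      by_contra h
      rw [Nat.choose_eq_zero_of_lt (by omega : N < k + 2),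
        Nat.choose_eq_zero_of_lt (by omega : N < k + 1)] at hpos
      omega
    have hsucc : N.choose (k + 2) + N.choose (k + 1) = (N + 1).choose (k + 2) := by
      rw [Nat.choose_succ_succ' N (k + 1), add_comm]
    rw [hsucc, delKK_choose (by omega), delKK_choose hN, Nat.choose_succ_succ' N k, add_comm]

open Finset Finset.Colex
open scoped FinsetFamily

namespace Finset

lemma shadow_map_mapEmbedding {α β : Type*} [DecidableEq α] [DecidableEq β] (f : α ↪ β)
    (𝒜 : Finset (Finset α)) :
    ∂ (𝒜.map (mapEmbedding f).toEmbedding) = (∂ 𝒜).map (mapEmbedding f).toEmbedding := by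
  ext t
  simp only [mem_shadow_iff, mem_map, RelEmbedding.coe_toEmbedding, mapEmbedding_apply]
  constructor
  · rintro ⟨_, ⟨s, hs, rfl⟩, _, hfa, rfl⟩
    obtain ⟨a, ha, rfl⟩ := mem_map.1 hfa
    exact ⟨s.erase a, ⟨s, hs, a, ha, rfl⟩, map_erase f s a⟩
  · rintro ⟨_, ⟨s, hs, a, ha, rfl⟩, rfl⟩
    exact ⟨s.map f, ⟨s, hs, rfl⟩, f a, mem_map_of_mem f ha, (map_erase f s a).symm⟩

lemma sized_map_mapEmbedding_iff {α β : Type*} (f : α ↪ β) {𝒜 : Finset (Finset α)} {r : ℕ} :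
    (𝒜.map (mapEmbedding f).toEmbedding : Set (Finset β)).Sized r ↔
      (𝒜 : Set (Finset α)).Sized r := by
  simp [Set.Sized]

lemma shadow_union {α : Type*} [DecidableEq α] (𝒜 ℬ : Finset (Finset α)) :
    ∂ (𝒜 ∪ ℬ) = ∂ 𝒜 ∪ ∂ ℬ :=
  sup_union

lemma shadow_image_insert_subset {α : Type*} [DecidableEq α] {𝒜 : Finset (Finset α)} {a : α}
    (h𝒜 : ∀ s ∈ 𝒜, a ∉ s) : ∂ (𝒜.image (insert a)) ⊆ 𝒜 ∪ (∂ 𝒜).image (insert a) := by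
  intro w hw
  obtain ⟨_, hs', x, hx, rfl⟩ := mem_shadow_iff.1 hw
  obtain ⟨s, hs, rfl⟩ := mem_image.1 hs'
  rcases eq_or_ne x a with rfl | hxa
  · exact mem_union_left _ (by rwa [erase_insert (h𝒜 s hs)])
  · rw [erase_insert_of_ne hxa.symm]
    exact mem_union_right _ (mem_image_of_mem _
      (erase_mem_shadow hs ((mem_insert.1 hx).resolve_left hxa)))

lemma shadow_memberSubfamily_subset {α : Type*} [DecidableEq α] (a : α) (𝒜 : Finset (Finset α)) :
    ∂ (𝒜.memberSubfamily a) ⊆ (∂ 𝒜).memberSubfamily a := by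
  intro w hw
  obtain ⟨x, hxw, hx⟩ := mem_shadow_iff_insert_mem.1 hw
  obtain ⟨hx𝒜, hax⟩ := mem_memberSubfamily.1 hx
  have hxa : x ≠ a := fun h => hax (h ▸ mem_insert_self x w)
  refine mem_memberSubfamily.2 ⟨mem_shadow_iff_insert_mem.2 ⟨x, ?_, ?_⟩,
    fun h => hax (mem_insert_of_mem h)⟩
  · simpa [hxa] using hxw
  · rwa [insert_comm]

lemma exists_subset_card_eq_forall_lt_mem {α : Type*} [LinearOrder α] (S : Finset α) {n : ℕ}
    (hn : n ≤ #S) : ∃ T ⊆ S, #T = n ∧ ∀ x ∈ T, ∀ y ∈ S, y < x → y ∈ T := by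
  classical
  induction S using Finset.induction_on_max generalizing n with
  | empty => exact ⟨∅, subset_refl _, by simp_all, by simp⟩
  | insert a S ha ih =>
    have haS : a ∉ S := fun h => lt_irrefl a (ha a h)
    rw [card_insert_of_notMem haS] at hn
    rcases hn.lt_or_eq with hn | rfl
    · obtain ⟨T, hTS, hT, hlow⟩ := ih (by omega : n ≤ #S)
      refine ⟨T, hTS.trans (subset_insert a S), hT, fun x hx y hy hyx => ?_⟩
      rcases mem_insert.1 hy with rfl | hy
      · exact absurd (ha x (hTS hx)) (not_lt.2 hyx.le)
      · exact hlow x hx y hy hyx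
    · exact ⟨insert a S, subset_refl _, card_insert_of_notMem haS, fun _ _ y hy _ => hy⟩

section FinToNat

variable {N r : ℕ}

/-- Families live on `ℕ` so that a new largest element is always available, while Mathlib's
Kruskal–Katona theory lives on `Fin N`. -/
def natFamily (𝒜 : Finset (Finset (Fin N))) : Finset (Finset ℕ) :=
  𝒜.map (mapEmbedding Fin.valEmbedding).toEmbedding

lemma exists_natFamily_eq {𝒜 : Finset (Finset ℕ)} (h : ∀ s ∈ 𝒜, s ⊆ range N) :
    ∃ 𝒜' : Finset (Finset (Fin N)), natFamily 𝒜' = 𝒜 := by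
  classical
  refine ⟨univ.filter (fun s => s.map Fin.valEmbedding ∈ 𝒜), ?_⟩
  ext t
  simp only [natFamily, mem_map, mem_filter, mem_univ, true_and, RelEmbedding.coe_toEmbedding,
    mapEmbedding_apply]
  refine ⟨fun ⟨s, hs, hst⟩ => hst ▸ hs, fun ht => ?_⟩
  have hlt : ∀ m ∈ t, m < N := fun m hm => mem_range.1 (h t ht hm)
  exact ⟨t.attachFin hlt, by rwa [map_valEmbedding_attachFin], map_valEmbedding_attachFin hlt⟩

lemma isInitSeg_natFamily_iff {𝒜 : Finset (Finset (Fin N))} :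
    IsInitSeg (natFamily 𝒜) r ↔ IsInitSeg 𝒜 r := by
  have hlt : ∀ {s t : Finset (Fin N)},
      toColex (t.map Fin.valEmbedding) < toColex (s.map Fin.valEmbedding) ↔
        toColex t < toColex s := by
    intro s t
    simpa only [map_eq_image, Fin.valEmbedding_apply] using
      toColex_image_lt_toColex_image Fin.val_strictMono
  refine and_congr (sized_map_mapEmbedding_iff _) ⟨fun h s t hs ht => ?_, fun h s t hs ht => ?_⟩
  · exact (mem_map' _).1 (h ((mem_map' _).2 hs) ⟨hlt.2 ht.1, by simpa using ht.2⟩)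
  · obtain ⟨s, hs', rfl⟩ := mem_map.1 hs
    have htN : ∀ m ∈ t, m < N := forall_lt_mono ht.1.le (by simp)
    rw [← map_valEmbedding_attachFin htN] at ht ⊢
    exact (mem_map' _).2 (h hs' ⟨hlt.1 ht.1, by simpa using ht.2⟩)

end FinToNat

variable {𝒞 : Finset (Finset ℕ)} {s t : Finset ℕ} {N r : ℕ}

lemma exists_forall_subset_range (𝒜 : Finset (Finset ℕ)) : ∃ N, ∀ s ∈ 𝒜, s ⊆ range N := by
  obtain ⟨N, hN⟩ := (𝒜.sup id).exists_nat_subset_range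
  exact ⟨N, fun s hs => (le_sup (f := id) hs).trans hN⟩

theorem kruskal_katona_nat {𝒜 𝒞 : Finset (Finset ℕ)} (h𝒜 : (𝒜 : Set (Finset ℕ)).Sized r)
    (h𝒞𝒜 : #𝒞 ≤ #𝒜) (h𝒞 : IsInitSeg 𝒞 r) : #(∂ 𝒞) ≤ #(∂ 𝒜) := by
  obtain ⟨N, hN⟩ := exists_forall_subset_range (𝒜 ∪ 𝒞)
  obtain ⟨𝒜', rfl⟩ := exists_natFamily_eq (N := N) fun s hs => hN s (mem_union_left _ hs)
  obtain ⟨𝒞', rfl⟩ := exists_natFamily_eq (N := N) fun s hs => hN s (mem_union_right _ hs)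
  simp only [natFamily, shadow_map_mapEmbedding, card_map] at h𝒞𝒜 ⊢
  exact kruskal_katona ((sized_map_mapEmbedding_iff _).1 h𝒜) h𝒞𝒜 (isInitSeg_natFamily_iff.1 h𝒞)

lemma exists_isInitSeg_card_eq {N n : ℕ} (hn : n ≤ N.choose r) :
    ∃ 𝒞 : Finset (Finset ℕ), IsInitSeg 𝒞 r ∧ #𝒞 = n := by
  set S := (powersetCard r (range N)).map toColex.toEmbedding
  obtain ⟨T, hTS, hT, hlow⟩ := exists_subset_card_eq_forall_lt_mem S
    (by simpa [S, card_powersetCard] using hn)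
  have hS : ∀ s, toColex s ∈ S ↔ s ⊆ range N ∧ #s = r := by simp [S]
  refine ⟨T.map ofColex.toEmbedding, ⟨fun s hs => ?_, fun s t hs ht => ?_⟩, by simpa using hT⟩
  · obtain ⟨c, hc, rfl⟩ := mem_map.1 hs
    exact ((hS _).1 (hTS hc)).2
  · obtain ⟨c, hc, rfl⟩ := mem_map.1 hs
    have hsN := ((hS _).1 (hTS hc)).1
    have htN : t ⊆ range N := fun m hm =>
      mem_range.2 (forall_lt_mono ht.1.le (fun b hb => mem_range.1 (hsN hb)) m hm)
    exact mem_map.2 ⟨toColex t, hlow c hc _ ((hS t).2 ⟨htN, ht.2⟩) ht.1, rfl⟩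

theorem exists_isInitSeg_card_eq_card_shadow_le {𝒜 : Finset (Finset ℕ)}
    (h𝒜 : (𝒜 : Set (Finset ℕ)).Sized r) :
    ∃ 𝒞 : Finset (Finset ℕ), IsInitSeg 𝒞 r ∧ #𝒞 = #𝒜 ∧ #(∂ 𝒞) ≤ #(∂ 𝒜) := by
  obtain ⟨N, hN⟩ := exists_forall_subset_range 𝒜
  have h𝒜N : 𝒜 ⊆ powersetCard r (range N) := fun s hs => mem_powersetCard.2 ⟨hN s hs, h𝒜 hs⟩
  obtain ⟨𝒞, h𝒞, h𝒞𝒜⟩ := exists_isInitSeg_card_eq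
    (by simpa [card_powersetCard] using card_le_card h𝒜N)
  exact ⟨𝒞, h𝒞, h𝒞𝒜, kruskal_katona_nat h𝒜 h𝒞𝒜.le h𝒞⟩

lemma subset_range_of_subset_range_succ (h : s ⊆ range (N + 1)) (hN : N ∉ s) : s ⊆ range N :=
  (subset_insert_iff_of_notMem hN).1 (range_add_one ▸ h)

namespace Colex

theorem IsInitSeg.shadow_nat (h𝒞 : IsInitSeg 𝒞 r) :
    IsInitSeg (∂ 𝒞) (r - 1) := by
  obtain ⟨N, hN⟩ := exists_forall_subset_range 𝒞
  obtain ⟨𝒞', rfl⟩ := exists_natFamily_eq hN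
  rw [natFamily, shadow_map_mapEmbedding, ← natFamily, isInitSeg_natFamily_iff]
  exact (isInitSeg_natFamily_iff.1 h𝒞).shadow

lemma IsInitSeg.powersetCard_range_subset (h𝒞 : IsInitSeg 𝒞 r) (ht : t ∈ 𝒞) (hNt : N ∈ t) :
    powersetCard r (range N) ⊆ 𝒞 := by
  intro u hu
  obtain ⟨huN, hur⟩ := mem_powersetCard.1 hu
  refine h𝒞.2 ht ⟨toColex_lt_toColex_iff_exists_forall_lt.2 ⟨N, hNt, ?_, ?_⟩, hur⟩
  · exact fun h => notMem_range_self (huN h)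
  · exact fun b hb _ => mem_range.1 (huN hb)

lemma IsInitSeg.nonMemberSubfamily_eq (h𝒞 : IsInitSeg 𝒞 r) (hN : ∀ s ∈ 𝒞, s ⊆ range (N + 1))
    (ht : t ∈ 𝒞) (hNt : N ∈ t) : 𝒞.nonMemberSubfamily N = powersetCard r (range N) := by
  refine Subset.antisymm (fun s hs => ?_) (fun u hu => ?_)
  · obtain ⟨hs𝒞, hNs⟩ := mem_nonMemberSubfamily.1 hs
    exact mem_powersetCard.2 ⟨subset_range_of_subset_range_succ (hN s hs𝒞) hNs, h𝒞.1 hs𝒞⟩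
  · exact mem_nonMemberSubfamily.2 ⟨h𝒞.powersetCard_range_subset ht hNt hu,
      fun h => notMem_range_self ((mem_powersetCard.1 hu).1 h)⟩

lemma IsInitSeg.memberSubfamily (h𝒞 : IsInitSeg 𝒞 (r + 1)) (hN : ∀ s ∈ 𝒞, s ⊆ range (N + 1)) :
    IsInitSeg (𝒞.memberSubfamily N) r := by
  refine ⟨fun s hs => ?_, fun s t hs ht => ?_⟩
  · obtain ⟨hs𝒞, hNs⟩ := mem_memberSubfamily.1 hs
    simpa [card_insert_of_notMem hNs] using h𝒞.1 hs𝒞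
  · obtain ⟨hs𝒞, hNs⟩ := mem_memberSubfamily.1 hs
    have hsN := subset_range_of_subset_range_succ ((subset_insert _ _).trans (hN _ hs𝒞)) hNs
    have hNt : N ∉ t := fun h =>
      lt_irrefl N (forall_lt_mono ht.1.le (fun b hb => mem_range.1 (hsN hb)) N h)
    have hlt := (toColex_sdiff_lt_toColex_sdiff (u := {N}) (by simp) (by simp)).1
      (show toColex (insert N t \ {N}) < toColex (insert N s \ {N}) by
        rw [sdiff_singleton_eq_erase, sdiff_singleton_eq_erase, erase_insert hNt,
          erase_insert hNs]
        exact ht.1)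
    refine mem_memberSubfamily.2 ⟨h𝒞.2 hs𝒞 ⟨hlt, ?_⟩, hNt⟩
    rw [card_insert_of_notMem hNt, ht.2]

lemma IsInitSeg.powersetCard_range_subset_shadow (h𝒞 : IsInitSeg 𝒞 (r + 1))
    (hN : ∀ s ∈ 𝒞, s ⊆ range (N + 1)) (ht : t ∈ 𝒞) (hNt : N ∈ t) :
    powersetCard r (range N) ⊆ ∂ 𝒞 := by
  intro u hu
  obtain ⟨huN, hur⟩ := mem_powersetCard.1 hu
  rw [mem_shadow_iff_insert_mem]
  rcases (card_le_card huN).lt_or_eq with hlt | heq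
  · obtain ⟨a, ha, hau⟩ := exists_mem_notMem_of_card_lt_card hlt
    refine ⟨a, hau, h𝒞.powersetCard_range_subset ht hNt (mem_powersetCard.2 ⟨?_, ?_⟩)⟩
    · exact insert_subset ha huN
    · rw [card_insert_of_notMem hau, hur]
  · -- `u = range N`, so `#t = N + 1` forces `t = insert N u`
    have hu : u = range N := eq_of_subset_of_card_le huN heq.ge
    have htN : t = range (N + 1) :=
      eq_of_subset_of_card_le (hN t ht) (by rw [card_range, h𝒞.1 ht, ← hur, heq, card_range])
    refine ⟨N, by simp [hu], ?_⟩
    rwa [hu, ← range_add_one, ← htN]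

theorem IsInitSeg.delKK_le_card_shadow {k : ℕ} (h𝒞 : IsInitSeg 𝒞 (k + 1))
    (hN : ∀ s ∈ 𝒞, s ⊆ range N) : delKK k #𝒞 ≤ #(∂ 𝒞) := by
  induction N generalizing k 𝒞 with
  | zero =>
    have : 𝒞 = ∅ := eq_empty_of_forall_notMem fun s hs => by
      simpa [h𝒞.1 hs] using card_le_card (hN s hs)
    simp [this, delKK_zero]
  | succ N ih =>
    rcases 𝒞.eq_empty_or_nonempty with rfl | ⟨s, hs⟩
    · simp [delKK_zero]
    obtain _ | k := k
    · rw [delKK_zero_left (card_pos.2 ⟨s, hs⟩), Nat.one_le_iff_ne_zero, card_ne_zero]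
      obtain ⟨a, ha⟩ := card_pos.1 (by rw [h𝒞.1 hs]; exact Nat.one_pos)
      exact ⟨_, erase_mem_shadow hs ha⟩
    by_cases htop : ∃ t ∈ 𝒞, N ∈ t
    swap
    · simp only [not_exists, not_and] at htop
      exact ih h𝒞 fun s hs => subset_range_of_subset_range_succ (hN s hs) (htop s hs)
    obtain ⟨t, ht, hNt⟩ := htop
    set 𝒟 := 𝒞.memberSubfamily N
    have h𝒟N : ∀ s ∈ 𝒟, s ⊆ range N := fun s hs => by
      obtain ⟨hs𝒞, hNs⟩ := mem_memberSubfamily.1 hs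
      exact subset_range_of_subset_range_succ ((subset_insert _ _).trans (hN _ hs𝒞)) hNs
    have h𝒟 : IsInitSeg 𝒟 (k + 1) := h𝒞.memberSubfamily hN
    have hcard : #𝒞 = N.choose (k + 2) + #𝒟 := by
      rw [← card_memberSubfamily_add_card_nonMemberSubfamily N 𝒞,
        h𝒞.nonMemberSubfamily_eq hN ht hNt, card_powersetCard, card_range, add_comm]
    have hd : #𝒟 ≤ N.choose (k + 1) := by
      simpa using card_le_card fun s hs => mem_powersetCard.2 ⟨h𝒟N s hs, h𝒟.1 hs⟩
    have hnon : powersetCard (k + 1) (range N) ⊆ (∂ 𝒞).nonMemberSubfamily N := fun u hu =>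
      mem_nonMemberSubfamily.2 ⟨h𝒞.powersetCard_range_subset_shadow hN ht hNt hu,
        fun h => notMem_range_self ((mem_powersetCard.1 hu).1 h)⟩
    calc delKK (k + 1) #𝒞 ≤ N.choose (k + 1) + delKK k #𝒟 := hcard ▸ delKK_succ_choose_add_le hd
      _ ≤ #((∂ 𝒞).nonMemberSubfamily N) + #((∂ 𝒞).memberSubfamily N) := by
        gcongr
        · simpa using card_le_card hnon
        · exact (ih h𝒟 h𝒟N).trans (card_le_card (shadow_memberSubfamily_subset N 𝒞))
      _ = #(∂ 𝒞) := by rw [add_comm, card_memberSubfamily_add_card_nonMemberSubfamily]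

end Colex

end Finset

/-- Indexed like `delKK k`: the `n` sets have size `k + 1`. -/
def ShadowBounded (k n m : ℕ) : Prop :=
  ∃ 𝒜 : Finset (Finset ℕ), (𝒜 : Set (Finset ℕ)).Sized (k + 1) ∧ #𝒜 = n ∧ #(∂ 𝒜) ≤ m

namespace ShadowBounded

variable {k n m : ℕ}

theorem delKK_le (h : ShadowBounded k n m) : delKK k n ≤ m := by
  obtain ⟨𝒜, h𝒜, rfl, hm⟩ := h
  obtain ⟨𝒞, h𝒞, hcard, hshadow⟩ := exists_isInitSeg_card_eq_card_shadow_le h𝒜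
  obtain ⟨N, hN⟩ := exists_forall_subset_range 𝒞
  calc delKK k #𝒜 = delKK k #𝒞 := by rw [hcard]
    _ ≤ #(∂ 𝒞) := h𝒞.delKK_le_card_shadow hN
    _ ≤ m := hshadow.trans hm

lemma of_card_eq_zero (k m : ℕ) : ShadowBounded k 0 m :=
  ⟨∅, by simp, rfl, by simp⟩

lemma of_pos (n : ℕ) (hm : 0 < m) : ShadowBounded 0 n m := by
  refine ⟨(range n).map ⟨({·}), singleton_injective⟩, by simp [Set.Sized], by simp, ?_⟩
  have : ∂ ((range n).map ⟨({·}), singleton_injective⟩) ⊆ {∅} := fun w hw => by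
    obtain ⟨_, hs, x, hx, rfl⟩ := mem_shadow_iff.1 hw
    obtain ⟨i, -, rfl⟩ := mem_map.1 hs
    simp_all
  exact (card_le_card this).trans (by rw [card_singleton]; exact hm)

/-- Add a new top element `M` to the sets of a colex initial segment `𝒞₁` realising `n₁`, next
to an initial segment `𝒞₀` realising `n₀`: the shadow is covered by `∂ 𝒞₀ ∪ 𝒞₁`, a union of two
nested initial segments, and by `∂ 𝒞₁` with `M` added. -/
theorem add {n₀ n₁ m₀ m₁ : ℕ} (h₀ : ShadowBounded (k + 1) n₀ m₀) (h₁ : ShadowBounded k n₁ m₁)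
    (hnm : n₁ ≤ m₀) : ShadowBounded (k + 1) (n₀ + n₁) (m₀ + m₁) := by
  obtain ⟨𝒜₀, hs₀, rfl, hm₀⟩ := h₀
  obtain ⟨𝒜₁, hs₁, rfl, hm₁⟩ := h₁
  obtain ⟨𝒞₀, hi₀, hc₀, hsh₀⟩ := exists_isInitSeg_card_eq_card_shadow_le hs₀
  obtain ⟨𝒞₁, hi₁, hc₁, hsh₁⟩ := exists_isInitSeg_card_eq_card_shadow_le hs₁
  obtain ⟨M, hM⟩ := exists_forall_subset_range (𝒞₀ ∪ 𝒞₁)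
  have hM₀ : ∀ s ∈ 𝒞₀, M ∉ s := fun s hs h =>
    notMem_range_self (hM s (mem_union_left _ hs) h)
  have hM₁ : ∀ s ∈ 𝒞₁, M ∉ s := fun s hs h =>
    notMem_range_self (hM s (mem_union_right _ hs) h)
  have hinj : Set.InjOn (insert M : Finset ℕ → Finset ℕ) 𝒞₁ := fun s hs t ht h => by
    rw [← erase_insert (hM₁ s hs), h, erase_insert (hM₁ t ht)]
  have hdisj : Disjoint 𝒞₀ (𝒞₁.image (insert M)) := disjoint_left.2 fun s hs h => by
    obtain ⟨t, -, rfl⟩ := mem_image.1 h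
    exact hM₀ _ hs (mem_insert_self M t)
  refine ⟨𝒞₀ ∪ 𝒞₁.image (insert M), ?_, ?_, ?_⟩
  · rw [coe_union, Set.sized_union]
    refine ⟨hi₀.1, fun s hs => ?_⟩
    obtain ⟨t, ht, rfl⟩ := mem_image.1 hs
    rw [card_insert_of_notMem (hM₁ t ht), hi₁.1 ht]
  · rw [card_union_of_disjoint hdisj, card_image_of_injOn hinj, hc₀, hc₁]
  · have hnested : #(∂ 𝒞₀ ∪ 𝒞₁) ≤ #(∂ 𝒜₀) ⊔ #𝒜₁ := by
      rcases hi₀.shadow_nat.total hi₁ with h | h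
      · rw [union_eq_right.2 h, hc₁]
        exact le_max_right _ _
      · rw [union_eq_left.2 h]
        exact hsh₀.trans (le_max_left _ _)
    calc #(∂ (𝒞₀ ∪ 𝒞₁.image (insert M)))
        ≤ #(∂ 𝒞₀ ∪ 𝒞₁ ∪ (∂ 𝒞₁).image (insert M)) := by
          refine card_le_card ?_
          rw [shadow_union, union_assoc]
          exact union_subset_union_right (shadow_image_insert_subset hM₁)
      _ ≤ #(∂ 𝒞₀ ∪ 𝒞₁) + #(∂ 𝒞₁) := (card_union_le _ _).trans (Nat.add_le_add_left card_image_le _)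
      _ ≤ m₀ + m₁ := by
        gcongr
        · exact hnested.trans (max_le hm₀ hnm)
        · exact hsh₁.trans hm₁

end ShadowBounded

section Poset

variable {P : Type*} [SemilatticeInf P] {rk : P → ℕ}

lemma inf_eq_of_rank_eq_succ (hm : RankStrictMono rk) {x y₁ y₂ : P} (h₁ : x ≤ y₁) (h₂ : x ≤ y₂)
    (hne : y₁ ≠ y₂) (hr₁ : rk y₁ = rk x + 1) (hr₂ : rk y₂ = rk x + 1) : y₁ ⊓ y₂ = x := by
  have hlt : y₁ ⊓ y₂ < y₁ := inf_le_left.lt_of_ne fun h => by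
    have := hm _ _ ((inf_eq_left.1 h).lt_of_ne hne)
    omega
  refine ((le_inf h₁ h₂).eq_or_lt.resolve_right fun h => ?_).symm
  have := hm _ _ h
  have := hm _ _ hlt
  omega

lemma exists_not_le_of_diamond (hm : RankStrictMono rk) (hd : DiamondProp rk) {a u y : P}
    (huy : u < y) (hr : rk y = rk u + 2) (hau : ¬ a ≤ u) :
    ∃ w, u < w ∧ w < y ∧ rk y = rk w + 1 ∧ ¬ a ≤ w := by
  obtain ⟨w₁, w₂, hne, ⟨hu₁, hy₁⟩, ⟨hu₂, hy₂⟩⟩ := hd u y huy hr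
  have := hm _ _ hu₁; have := hm _ _ hy₁; have := hm _ _ hu₂; have := hm _ _ hy₂
  by_cases ha₁ : a ≤ w₁
  · refine ⟨w₂, hu₂, hy₂, by omega, fun ha₂ => hau ?_⟩
    rw [← inf_eq_of_rank_eq_succ hm hu₁.le hu₂.le hne (by omega) (by omega)]
    exact le_inf ha₁ ha₂
  · exact ⟨w₁, hu₁, hy₁, by omega, ha₁⟩

/-- Pass to a lower cover of `y`; if it still lies above `a`, recurse below it and finish with
the diamond property. -/
lemma exists_lt_not_le_rank_succ [Finite P] (hc : CoverRank rk) (hm : RankStrictMono rk)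
    (hd : DiamondProp rk) {a b y : P} (hba : b < a) (hay : a ≤ y) (n : ℕ)
    (hn : rk y = rk b + n + 2) : ∃ w, b ≤ w ∧ w < y ∧ rk y = rk w + 1 ∧ ¬ a ≤ w := by
  induction n generalizing y with
  | zero =>
    obtain ⟨w, hbw, hwy, hr, haw⟩ := exists_not_le_of_diamond hm hd (hba.trans_le hay) hn
      hba.not_ge
    exact ⟨w, hbw.le, hwy, hr, haw⟩
  | succ n ih =>
    obtain ⟨w₀, hbw₀, hw₀y⟩ := exists_le_covBy_of_lt (hba.trans_le hay)
    have hr₀ := hc _ _ hw₀y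
    by_cases haw₀ : a ≤ w₀
    · obtain ⟨u, hbu, huw₀, hru, hau⟩ := ih haw₀ (by omega)
      obtain ⟨w, huw, hwy, hr, haw⟩ :=
        exists_not_le_of_diamond hm hd (huw₀.trans hw₀y.lt) (by omega) hau
      exact ⟨w, hbu.trans huw.le, hwy, hr, haw⟩
    · exact ⟨w₀, hbw₀, hw₀y.lt, hr₀, haw₀⟩

lemma card_filter_le_card_filter_not_le [Finite P] [DecidableLE P] (hc : CoverRank rk)
    (hm : RankStrictMono rk) (hd : DiamondProp rk) {S : Finset P} (hS : (S : Set P).OrdConnected)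
    {a b : P} (hbS : b ∈ S) (hba : b < a) (k : ℕ) :
    #{y ∈ S | a ≤ y ∧ rk y = rk b + (k + 1) + 1} ≤ #{w ∈ S | ¬ a ≤ w ∧ rk w = rk b + (k + 1)} := by
  have hlow : ∀ y ∈ {y ∈ S | a ≤ y ∧ rk y = rk b + (k + 1) + 1},
      ∃ w, b ≤ w ∧ w < y ∧ rk y = rk w + 1 ∧ ¬ a ≤ w := fun y hy => by
    obtain ⟨-, hay, hry⟩ := mem_filter.1 hy
    exact exists_lt_not_le_rank_succ hc hm hd hba hay k (by omega)
  choose! g hbg hgy hrg hag using hlow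
  refine card_le_card_of_injOn g (fun y hy => ?_) (fun y₁ hy₁ y₂ hy₂ h => ?_)
  · obtain ⟨hyS, -, hry⟩ := mem_filter.1 hy
    have := hrg y hy
    exact mem_filter.2 ⟨hS.out hbS hyS ⟨hbg y hy, (hgy y hy).le⟩, hag y hy, by omega⟩
  · -- two distinct `y`s with the same lower cover would have it as their meet, which is `≥ a`
    by_contra hne
    have hr₁ := hrg y₁ hy₁
    have hr₂ := hrg y₂ hy₂
    rw [← h] at hr₂
    refine hag y₁ hy₁ ?_
    rw [← inf_eq_of_rank_eq_succ hm (hgy y₁ hy₁).le (h ▸ (hgy y₂ hy₂).le) hne hr₁ hr₂]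
    exact le_inf (mem_filter.1 hy₁).2.1 (mem_filter.1 hy₂).2.1

lemma card_filter_eq_card_filter_not_add_card_filter {α : Type*} (S : Finset α) (p q : α → Prop)
    [DecidablePred p] [DecidablePred q] :
    #{x ∈ S | p x} = #{x ∈ S | ¬ q x ∧ p x} + #{x ∈ S | q x ∧ p x} := by
  rw [← card_filter_add_card_filter_not (s := {x ∈ S | p x}) q, filter_filter,
    filter_filter, add_comm]
  simp only [and_comm]

/-- The pieces of Wegner's split are order-convex subsets of `P` with a least element `b`, so the
rank, cover and diamond hypotheses stay those of `P`. -/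
theorem shadowBounded_rank_levels [Finite P] (hc : CoverRank rk) (hm : RankStrictMono rk)
    (hd : DiamondProp rk) (S : Finset P) (b : P) (hbS : b ∈ S) (hb : ∀ x ∈ S, b ≤ x)
    (hS : (S : Set P).OrdConnected) (k : ℕ) :
    ShadowBounded k #{p ∈ S | rk p = rk b + k + 1} #{p ∈ S | rk p = rk b + k} := by
  classical
  induction S using Finset.strongInduction generalizing b k with
  | H S ih =>
  obtain _ | k := k
  · exact ShadowBounded.of_pos _ (card_pos.2 ⟨b, mem_filter.2 ⟨hbS, rfl⟩⟩)
  rcases Nat.eq_zero_or_pos #{p ∈ S | rk p = rk b + (k + 1) + 1} with hempty | hpos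
  · rw [hempty]
    exact ShadowBounded.of_card_eq_zero _ _
  obtain ⟨y, hy⟩ := card_pos.1 hpos
  obtain ⟨hyS, hry⟩ := mem_filter.1 hy
  have hby : b < y := (hb y hyS).lt_of_ne fun h => by subst h; omega
  obtain ⟨a, hba, hay⟩ := exists_covBy_le_of_lt hby
  have hra := hc _ _ hba
  have haS : a ∈ S := hS.out hbS hyS ⟨hba.le, hay⟩
  have hU := ih {p ∈ S | a ≤ p} (filter_ssubset.2 ⟨b, hbS, hba.lt.not_ge⟩) a
    (mem_filter.2 ⟨haS, le_rfl⟩) (fun x hx => (mem_filter.1 hx).2)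
    (by rw [coe_filter]; exact hS.inter Set.ordConnected_Ici) k
  have hQ := ih {p ∈ S | ¬ a ≤ p} (filter_ssubset.2 ⟨a, haS, not_not.2 le_rfl⟩) b
    (mem_filter.2 ⟨hbS, hba.lt.not_ge⟩) (fun x hx => hb x (mem_filter.1 hx).1)
    (by rw [coe_filter]; exact hS.inter (isUpperSet_Ici a).compl.ordConnected) (k + 1)
  rw [hra, show rk b + 1 + k + 1 = rk b + (k + 1) + 1 by ring,
    show rk b + 1 + k = rk b + (k + 1) by ring] at hU
  simp only [filter_filter] at hU hQ
  rw [card_filter_eq_card_filter_not_add_card_filter S _ (a ≤ ·),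
    card_filter_eq_card_filter_not_add_card_filter S (fun p => rk p = rk b + (k + 1)) (a ≤ ·)]
  exact hQ.add hU (card_filter_le_card_filter_not_le hc hm hd hS hbS hba.lt k)

end Poset

/-- Wegner's theorem: every finite ranked meet semi-lattice with the diamond
property satisfies the Kruskal–Katona inequalities `∂_k(f_k) ≤ f_{k-1}` for all
`k ≥ 0` (`f i` counts rank-`i` elements, so `f 0 = f_{-1}`). -/
theorem wegner_kruskalKatona {P : Type*} [SemilatticeInf P] [OrderBot P]
    [Fintype P] (rk : P → ℕ) (h0 : rk ⊥ = 0) (hc : CoverRank rk)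
    (hm : RankStrictMono rk) (hd : DiamondProp rk)
    (f : ℕ → ℕ) (hf : ∀ i, f i = Nat.card {p : P | rk p = i}) :
    ∀ k : ℕ, delKK k (f (k + 1)) ≤ f k := by
  intro k
  have hlevel : ∀ i, f i = #{p | rk p = i} := fun i => by
    rw [hf, Nat.card_eq_card_toFinset, Set.toFinset_ofPred]
  have := (shadowBounded_rank_levels hc hm hd univ ⊥ (mem_univ _) (fun _ _ => bot_le)
    (by rw [coe_univ]; exact Set.ordConnected_univ) k).delKK_le
  simpa [hlevel, h0] using this
end

section
/- Let L be a ranked meet semi-lattice. The set L' of multichains (from downward-closed families F(l)) with componentwise order is a meet semi-lattice: the meet of (a_m ≤...≤ a_0) and (b_k ≤...≤ b_0) is (a_{min(m,k)} ∧ b_{min(m,k)} ≤ ... ≤ a_0 ∧ b_0), after discarding any initial entries equal to 0̂. -/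
/-- The componentwise order on multichains.  A multichain `(a_m ≤ ... ≤ a_1 ≤ a_0)`
is represented as the list `[a_0, a_1, ..., a_m]` (top element first).
`MCle a b` iff `a` is at most as long as `b` and componentwise below it. -/
def MCle {L : Type*} [Preorder L] (a b : List L) : Prop :=
  a.length ≤ b.length ∧
    ∀ (i : ℕ) (ha : i < a.length) (hb : i < b.length), a.get ⟨i, ha⟩ ≤ b.get ⟨i, hb⟩

/-- A multichain in `L ∖ {⊥}`: a weakly decreasing list (top first) of elements
strictly above `⊥`. -/
def IsMC {L : Type*} [Preorder L] [OrderBot L] (c : List L) : Prop :=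
  List.Chain' (fun x y => y ≤ x) c ∧ ∀ x ∈ c, ⊥ < x

/-- Type synonym: multichains in `L`, partially ordered componentwise. -/
def MC (L : Type*) := List L

instance {L : Type*} [PartialOrder L] : PartialOrder (MC L) where
  le a b := MCle (L := L) a b
  le_refl a := ⟨le_rfl, fun _ _ _ => le_rfl⟩
  le_trans a b c hab hbc :=
    ⟨hab.1.trans hbc.1, fun i ha hc =>
      (hab.2 i ha (lt_of_lt_of_le ha hab.1)).trans
        (hbc.2 i (lt_of_lt_of_le ha hab.1) hc)⟩
  le_antisymm a b hab hba :=
    List.ext_get (le_antisymm hab.1 hba.1)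
      (fun i h1 h2 => le_antisymm (hab.2 i h1 h2) (hba.2 i h2 h1))

/-- The rank of a multichain: the sum of the ranks of its entries. -/
def rankMC {L : Type*} (rk : L → ℕ) (c : List L) : ℕ := (c.map rk).sum

/-- The underlying set of `L'`: the union of the families `F l` together with the
empty multichain as minimum. -/
def MCcarrier {L : Type*} (F : L → Set (List L)) : Set (MC L) :=
  {c | c = ([] : List L) ∨ ∃ l : L, (c : List L) ∈ F l}

/-!
The componentwise meet `zipWith (· ⊓ ·) a b` of the common prefix is already the greatest
lower bound of `a` and `b` for the order `MCle` on all lists, and it is again weakly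
decreasing. A lower bound `w` in `L'` has no entry `⊥`, so it is not longer than the part of
that meet in front of its trailing `⊥` entries; truncating there therefore keeps it the
greatest lower bound, makes it a multichain in `L ∖ {⊥}`, and the downward closure of the
families `F l` puts it back in `L'`.
-/

section ListOrder

open List

variable {L : Type*}

theorem MCle.trans [Preorder L] {a b c : List L} (hab : MCle a b) (hbc : MCle b c) :
    MCle a c :=
  ⟨hab.1.trans hbc.1, fun i ha hc =>
    (hab.2 i ha (ha.trans_le hab.1)).trans (hbc.2 i (ha.trans_le hab.1) hc)⟩

theorem MCle.of_isPrefix [Preorder L] {m l : List L} (h : m <+: l) : MCle m l :=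
  ⟨h.length_le, fun _ hm _ => (h.getElem hm).le⟩

theorem MCle.isPrefix_of_length_le [Preorder L] {w m l : List L} (h : MCle w l) (hm : m <+: l)
    (hlen : w.length ≤ m.length) : MCle w m :=
  ⟨hlen, fun i hw hi => (h.2 i hw (hi.trans_le hm.length_le)).trans_eq (hm.getElem hi).symm⟩

theorem MCle.zipWith_inf_left [SemilatticeInf L] (a b : List L) :
    MCle (zipWith (· ⊓ ·) a b) a :=
  ⟨by simp, fun _ _ _ => by simp⟩

theorem MCle.zipWith_inf_right [SemilatticeInf L] (a b : List L) :
    MCle (zipWith (· ⊓ ·) a b) b :=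
  ⟨by simp, fun _ _ _ => by simp⟩

theorem MCle.le_zipWith_inf [SemilatticeInf L] {w a b : List L} (ha : MCle w a)
    (hb : MCle w b) : MCle w (zipWith (· ⊓ ·) a b) :=
  ⟨by simpa using ⟨ha.1, hb.1⟩, fun i hw hi => by
    simp only [length_zipWith, Nat.lt_min] at hi
    simpa using ⟨ha.2 i hw hi.1, hb.2 i hw hi.2⟩⟩

theorem isChain_zipWith_inf [SemilatticeInf L] {a b : List L}
    (ha : a.IsChain fun x y => y ≤ x) (hb : b.IsChain fun x y => y ≤ x) :
    (zipWith (· ⊓ ·) a b).IsChain fun x y => y ≤ x := by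
  rw [isChain_iff_getElem] at ha hb ⊢
  intro i hi
  simp only [length_zipWith, Nat.lt_min] at hi
  simpa using inf_le_inf (ha i hi.1) (hb i hi.2)

end ListOrder

section DropBotTail

open List

variable {L : Type*} [PartialOrder L] [OrderBot L] [DecidableEq L]

def dropBotTail (l : List L) : List L :=
  (l.reverse.dropWhile fun x => decide (x = ⊥)).reverse

theorem dropBotTail_isPrefix (l : List L) : dropBotTail l <+: l := by
  simpa [dropBotTail] using reverse_prefix.2 (dropWhile_suffix (l := l.reverse) _)

theorem getElem_eq_bot_of_length_dropBotTail_le {l : List L} {i : ℕ} (hi : i < l.length)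
    (h : (dropBotTail l).length ≤ i) : l[i] = ⊥ := by
  have hsplit : l = dropBotTail l ++ (l.reverse.takeWhile fun x => decide (x = ⊥)).reverse := by
    conv_lhs => rw [← reverse_reverse l, ← takeWhile_append_dropWhile (l := l.reverse)
      (p := fun x => decide (x = ⊥))]
    rw [reverse_append, dropBotTail]
  rw [getElem_of_eq hsplit hi, getElem_append_right h]
  exact of_decide_eq_true (mem_takeWhile_imp (p := fun x => decide (x = ⊥))
    (mem_reverse.1 (getElem_mem _)))

theorem bot_lt_of_mem_dropBotTail {l : List L} (hl : l.IsChain fun x y => y ≤ x) {x : L}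
    (hx : x ∈ dropBotTail l) : ⊥ < x := by
  rw [dropBotTail, mem_reverse] at hx
  -- the first surviving entry of the reversed list is not `⊥` and lies below all later ones
  obtain ⟨y, t, hyt⟩ := exists_cons_of_ne_nil (ne_nil_of_mem hx)
  have hy : y ≠ ⊥ := by
    simpa [hyt] using head_dropWhile_not (fun x => decide (x = ⊥)) (ne_nil_of_mem hx)
  have hpw : (y :: t).Pairwise (· ≤ ·) := by
    rw [← hyt]
    exact ((pairwise_reverse.2 (isChain_iff_pairwise.1 hl)).sublist (dropWhile_suffix _).sublist)
  rw [hyt, mem_cons] at hx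
  rcases hx with rfl | hxt
  · exact bot_lt_iff_ne_bot.2 hy
  · exact (bot_lt_iff_ne_bot.2 hy).trans_le (pairwise_cons.1 hpw |>.1 x hxt)

theorem isMC_dropBotTail {l : List L} (hl : l.IsChain fun x y => y ≤ x) :
    IsMC (dropBotTail l) :=
  ⟨hl.prefix (dropBotTail_isPrefix l), fun _ => bot_lt_of_mem_dropBotTail hl⟩

theorem MCle.dropBotTail {w l : List L} (hw : ∀ x ∈ w, ⊥ < x) (h : MCle w l) :
    MCle w (dropBotTail l) := by
  refine h.isPrefix_of_length_le (dropBotTail_isPrefix l) (not_lt.1 fun hlt => ?_)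
  have hwl := h.2 _ hlt (hlt.trans_le h.1)
  rw [get_eq_getElem, get_eq_getElem, getElem_eq_bot_of_length_dropBotTail_le _ le_rfl] at hwl
  exact (hw _ (getElem_mem hlt)).not_ge hwl

end DropBotTail

section MCcarrier

open List

variable {L : Type*} [Preorder L] [OrderBot L] {F : L → Set (List L)}

theorem isMC_of_mem_MCcarrier (hF : ∀ l, ∀ c ∈ F l, IsMC c) {c : List L}
    (hc : c ∈ MCcarrier F) : IsMC c := by
  rcases hc with rfl | ⟨l, hl⟩
  · exact ⟨isChain_nil, by simp⟩
  · exact hF l c hl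

theorem mem_MCcarrier_of_MCle
    (hF : ∀ l : L, ∀ a b : List L, IsMC a → a ≠ [] → MCle a b → a ≠ b → b ∈ F l → a ∈ F l)
    {a m : List L} (ha : a ∈ MCcarrier F) (hm : IsMC m) (hma : MCle m a) :
    m ∈ MCcarrier F := by
  rcases eq_or_ne m [] with rfl | hm0
  · exact Or.inl rfl
  rcases ha with rfl | ⟨l, hl⟩
  · exact absurd (length_eq_zero_iff.1 (Nat.le_zero.1 hma.1)) hm0
  rcases eq_or_ne m a with rfl | hma'
  · exact Or.inr ⟨l, hl⟩
  · exact Or.inr ⟨l, hF l m a hm hm0 hma hma' hl⟩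

end MCcarrier

/-- `L'` is a meet semi-lattice: the meet of two multichains is the componentwise
meet of their common-length prefixes, after discarding the initial (lowest)
entries equal to `⊥`. -/
theorem Lprime_meet {L : Type*} [SemilatticeInf L] [OrderBot L] [DecidableEq L]
    (F : L → Set (List L))
    (hFmc : ∀ l : L, ∀ c ∈ F l, IsMC c ∧ ∀ x ∈ c, x ≤ l)
    (hFclosed : ∀ l : L, ∀ a b : List L,
      IsMC a → a ≠ [] → MCle a b → a ≠ b → b ∈ F l → a ∈ F l) :
    ∀ a b : (MCcarrier F), ∃ m : (MCcarrier F),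
      (m : MC L) =
        (((List.zipWith (· ⊓ ·) (a : MC L) (b : MC L)).reverse.dropWhile
          (fun x => decide (x = ⊥))).reverse) ∧
      IsGLB ({a, b} : Set (MCcarrier F)) m := by
  rintro ⟨a, ha⟩ ⟨b, hb⟩
  have hMC {c : List L} (hc : c ∈ MCcarrier F) : IsMC c :=
    isMC_of_mem_MCcarrier (fun l c hc => (hFmc l c hc).1) hc
  have hm : IsMC (dropBotTail (List.zipWith (· ⊓ ·) a b)) :=
    isMC_dropBotTail (isChain_zipWith_inf (hMC ha).1 (hMC hb).1)
  have hma := (MCle.of_isPrefix (dropBotTail_isPrefix _)).trans (MCle.zipWith_inf_left a b)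
  have hmb := (MCle.of_isPrefix (dropBotTail_isPrefix _)).trans (MCle.zipWith_inf_right a b)
  refine ⟨⟨_, mem_MCcarrier_of_MCle hFclosed ha hm hma⟩, rfl, ?_, ?_⟩
  · rintro _ (rfl | rfl)
    exacts [hma, hmb]
  · rintro ⟨w, hw⟩ hlow
    exact (MCle.le_zipWith_inf (hlow (Set.mem_insert _ _))
      (hlow (Set.mem_insert_of_mem _ rfl))).dropBotTail (hMC hw).2
end

section
/- Let P be a finite member of the family 𝒫 (a generalized multicomplex built from a geometric meet semi-lattice), and let k[P] = k[x_1,...,x_n]/I_P where I_P = I_0 + I_1 + I_2 + I_3. Then for all i, the dimension over k of the degree-(i+1) graded component of k[P] equals f_i(P), the number of rank-(i+1) elements of P. -/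
/-- Atomic: every element is the join of the atoms (rank-1 elements) below it. -/
def AtomicRk {L : Type*} [PartialOrder L] (rk : L → ℕ) : Prop :=
  ∀ l : L, IsLUB {a : L | rk a = 1 ∧ a ≤ l} l

/-- `JoinP P v p` : `p` is the join `∨ᵢ xᵢ^(v i)` computed in the poset of
monomials `P` (ordered by divisibility, i.e. pointwise on exponent vectors):
`p ∈ P` is the least element of `P` dividing by every pure power `xᵢ^(v i)`. -/
def JoinP {A : Type*} [DecidableEq A] (P : Set (A → ℕ)) (v : A → ℕ)
    (p : A → ℕ) : Prop :=
  p ∈ P ∧ (∀ a : A, Pi.single a (v a) ≤ p) ∧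
    ∀ q ∈ P, (∀ a : A, Pi.single a (v a) ≤ q) → p ≤ q

/-!
The degree-`d` part of `k[x] / I` is spanned by monomials, and the generators of `I` say two things
about a monomial `x^v`: it vanishes unless `v` has a join `p ∈ P` of rank `∑ v`, and two such
monomials with the same join are equal. Everything follows once the partial map `v ↦ p` is known to
be compatible with multiplication by monomials: the linear map sending `x^v` to the basis vector of
its join then kills `I`, so the classes of representatives of the rank-`d` elements of `P` form a
basis.

Compatibility comes from the semimodular lattice. A square-free `x^v` has join `m(j)`, where `j`
is the join of the atoms of its support, and it has the right rank iff these atoms are independent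
(`rk j = #supp v`). A monomial with a repeated variable has a join only if it lies in `P`, and is
then its own join. The construction of `P` shows that the support of such a monomial of `P` is
independent and that its subsets containing the repeated variable are flats. Hence monomials of the
right rank are closed under taking divisors, and `x^u x^v`, `x^u x^w` have the same join whenever
`x^v`, `x^w` do.
-/

open Finset

theorem isLUB_union_congr {α : Type*} [Preorder α] {r s t : Set α} {j l : α}
    (hs : IsLUB s j) (ht : IsLUB t j) : IsLUB (r ∪ s) l ↔ IsLUB (r ∪ t) l :=
  isLUB_congr (by rw [upperBounds_union, upperBounds_union, hs.upperBounds_eq, ht.upperBounds_eq])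

theorem exists_isLUB_of_bddAbove {L : Type*} [SemilatticeInf L] [Finite L] {s : Set L}
    (hs : BddAbove s) : ∃ j, IsLUB s j := by
  obtain ⟨j, hj⟩ := exists_minimal_of_wellFoundedLT (· ∈ upperBounds s) hs
  refine ⟨j, hj.prop, fun u hu => ?_⟩
  have hju : j ⊓ u ∈ upperBounds s := fun x hx => le_inf (hj.prop hx) (hu hx)
  exact (hj.le_of_le hju inf_le_left).trans inf_le_right

theorem RankStrictMono.monotone {P : Type*} [PartialOrder P] {rk : P → ℕ}
    (hm : RankStrictMono rk) : Monotone rk := fun a b hab =>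
  hab.eq_or_lt.elim (fun h => h ▸ le_rfl) fun h => (hm a b h).le

section JoinP

variable {A : Type*} [DecidableEq A] {P : Set (A → ℕ)} {v p : A → ℕ}

theorem forall_single_le_iff {q : A → ℕ} : (∀ a, Pi.single a (v a) ≤ q) ↔ v ≤ q := by
  refine ⟨fun h a => by simpa using h a a, fun h a b => ?_⟩
  by_cases hab : b = a
  · subst hab; simpa using h b
  · simp [hab]

theorem joinP_iff_isLeast : JoinP P v p ↔ IsLeast {q | q ∈ P ∧ v ≤ q} p := by
  simp only [JoinP, forall_single_le_iff, IsLeast, lowerBounds, Set.mem_ofPred_eq, and_imp,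
    and_assoc]

theorem JoinP.unique {p' : A → ℕ} (h : JoinP P v p) (h' : JoinP P v p') : p = p' :=
  (joinP_iff_isLeast.1 h).unique (joinP_iff_isLeast.1 h')

theorem JoinP.le (h : JoinP P v p) : v ≤ p :=
  forall_single_le_iff.1 h.2.1

end JoinP

namespace MvPolynomial

variable {σ X k : Type*} [Field k]

noncomputable def fiberMap (J : (σ →₀ ℕ) → Option X) : MvPolynomial σ k →ₗ[k] X →₀ k :=
  (basisMonomials σ k).constr k fun e => (J e).elim 0 fun x => Finsupp.single x 1

theorem fiberMap_monomial_one (J : (σ →₀ ℕ) → Option X) (e : σ →₀ ℕ) :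
    fiberMap J (monomial e (1 : k)) = (J e).elim 0 fun x => Finsupp.single x 1 := by
  simpa [fiberMap] using (basisMonomials σ k).constr_basis k
    (fun e => (J e).elim 0 fun x => Finsupp.single x (1 : k)) e

theorem fiberMap_eq_zero_of_mem_span {J : (σ →₀ ℕ) → Option X}
    (hnone : ∀ u e, J e = none → J (u + e) = none)
    (hcongr : ∀ u e f, J e = J f → J (u + e) = J (u + f))
    {S : Set (MvPolynomial σ k)}
    (hS : ∀ s ∈ S, (∃ e, J e = none ∧ s = monomial e 1) ∨
      ∃ e f, J e = J f ∧ s = monomial e 1 - monomial f 1)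
    {x : MvPolynomial σ k} (hx : x ∈ Ideal.span S) : fiberMap J x = 0 := by
  have hmul : ∀ s ∈ S, ∀ r, fiberMap J (r * s) = 0 := by
    intro s hs r
    suffices fiberMap J ∘ₗ LinearMap.mulRight k s = 0 from LinearMap.congr_fun this r
    refine (basisMonomials σ k).ext fun u => ?_
    rw [LinearMap.comp_apply, LinearMap.mulRight_apply, coe_basisMonomials, LinearMap.zero_apply]
    rcases hS s hs with ⟨e, he, rfl⟩ | ⟨e, f, hef, rfl⟩
    · rw [monomial_mul, one_mul, fiberMap_monomial_one, hnone u e he, Option.elim_none]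
    · rw [mul_sub, monomial_mul, monomial_mul, one_mul, map_sub, fiberMap_monomial_one,
        fiberMap_monomial_one, hcongr u e f hef, sub_self]
  suffices ∀ r, fiberMap J (r * x) = 0 by simpa using this 1
  induction hx using Submodule.span_induction with
  | mem s hs => exact hmul s hs
  | zero => simp
  | add y z _ _ hy hz => intro r; rw [mul_add, map_add, hy, hz, add_zero]
  | smul a y _ hy => intro r; rw [smul_eq_mul, ← mul_assoc, hy]

theorem linearIndependent_mk_monomial {J : (σ →₀ ℕ) → Option X} {I : Ideal (MvPolynomial σ k)}
    (hI : ∀ x ∈ I, fiberMap J x = 0) {Y : Set X} {rep : Y → σ →₀ ℕ}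
    (hrep : ∀ y, J (rep y) = some ↑y) :
    LinearIndependent k fun y => Ideal.Quotient.mk I (monomial (rep y) (1 : k)) := by
  have hker : I.restrictScalars k ≤ LinearMap.ker (fiberMap J) := fun x hx => hI x hx
  let ψ := (I.restrictScalars k).liftQ (fiberMap J) hker ∘ₗ
    (Submodule.Quotient.restrictScalarsEquiv k I).symm.toLinearMap
  have hψ : (ψ ∘ fun y => Ideal.Quotient.mk I (monomial (rep y) (1 : k))) =
      fun y : Y => Finsupp.single (y : X) (1 : k) := by
    ext1 y
    change (I.restrictScalars k).liftQ (fiberMap J) hker (Submodule.Quotient.mk _) = _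
    rw [Submodule.liftQ_apply]
    exact (fiberMap_monomial_one J (rep y)).trans (by rw [hrep]; rfl)
  exact LinearIndependent.of_comp ψ (hψ ▸
    (Finsupp.linearIndependent_single_one (ι := X) (R := k)).comp _ Subtype.val_injective)

theorem map_homogeneousSubmodule_eq_span {J : (σ →₀ ℕ) → Option X}
    {I : Ideal (MvPolynomial σ k)} (hnone : ∀ e, J e = none → monomial e 1 ∈ I)
    (hsome : ∀ e f x, J e = some x → J f = some x → monomial e 1 - monomial f 1 ∈ I) {d : ℕ}
    {rep : {x : X | ∃ e : σ →₀ ℕ, e.degree = d ∧ J e = some x} → σ →₀ ℕ}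
    (hrep_deg : ∀ y, (rep y).degree = d) (hrep : ∀ y, J (rep y) = some ↑y) :
    (homogeneousSubmodule σ k d).map (Ideal.Quotient.mkₐ k I).toLinearMap =
      Submodule.span k (Set.range fun y => Ideal.Quotient.mk I (monomial (rep y) (1 : k))) := by
  refine le_antisymm ?_ ?_
  · rw [homogeneousSubmodule_eq_finsupp_supported, AddMonoidAlgebra.supported_eq_span_single,
      Submodule.map_span, Submodule.span_le]
    rintro _ ⟨_, ⟨e, he, rfl⟩, rfl⟩
    simp only [single_eq_monomial, AlgHom.toLinearMap_apply, Ideal.Quotient.mkₐ_eq_mk,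
      SetLike.mem_coe]
    cases hJ : J e with
    | none => simp [Ideal.Quotient.eq_zero_iff_mem.2 (hnone e hJ)]
    | some x =>
      let y : {x : X | ∃ e : σ →₀ ℕ, e.degree = d ∧ J e = some x} := ⟨x, e, he, hJ⟩
      exact Submodule.subset_span ⟨y, (Ideal.Quotient.eq.2 (hsome _ _ x hJ (hrep y))).symm⟩
  · rw [Submodule.span_le, Set.range_subset_iff]
    exact fun y => Submodule.mem_map_of_mem (isHomogeneous_monomial _ (hrep_deg y))

theorem finrank_map_homogeneousSubmodule (J : (σ →₀ ℕ) → Option X)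
    (I : Ideal (MvPolynomial σ k)) (hI : ∀ x ∈ I, fiberMap J x = 0)
    (hnone : ∀ e, J e = none → monomial e 1 ∈ I)
    (hsome : ∀ e f x, J e = some x → J f = some x → monomial e 1 - monomial f 1 ∈ I) (d : ℕ) :
    Module.finrank k ((homogeneousSubmodule σ k d).map (Ideal.Quotient.mkₐ k I).toLinearMap) =
      Nat.card {x : X | ∃ e : σ →₀ ℕ, e.degree = d ∧ J e = some x} := by
  choose rep hrep_deg hrep using fun y : {x : X | ∃ e : σ →₀ ℕ, e.degree = d ∧ J e = some x} => y.2
  have hli := linearIndependent_mk_monomial (k := k) hI hrep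
  rw [map_homogeneousSubmodule_eq_span hnone hsome hrep_deg hrep, Module.finrank, rank_span hli]
  exact Nat.card_range_of_injective hli.injective

end MvPolynomial

namespace Multicomplex

variable {L A : Type*}

section Lattice

variable {rk : L → ℕ} {atom : A ≃ {a : L // rk a = 1}}

def atomSet (atom : A ≃ {a : L // rk a = 1}) (T : Finset A) : Set L :=
  (fun a => (atom a : L)) '' T

theorem atomSet_union [DecidableEq A] (S T : Finset A) :
    atomSet atom (S ∪ T) = atomSet atom S ∪ atomSet atom T := by
  simp [atomSet, Set.image_union]

theorem atomSet_insert [DecidableEq A] (a : A) (T : Finset A) :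
    atomSet atom (insert a T) = insert (atom a : L) (atomSet atom T) := by
  simp [atomSet, Set.image_insert_eq]

variable [SemilatticeInf L]

def RankSubmodular (rk : L → ℕ) : Prop :=
  ∀ x y j : L, IsLUB ({x, y} : Set L) j → rk (x ⊓ y) + rk j ≤ rk x + rk y

theorem mem_upperBounds_atomSet {T : Finset A} {l : L} :
    l ∈ upperBounds (atomSet atom T) ↔ ∀ a ∈ T, (atom a : L) ≤ l := by
  simp [atomSet, upperBounds]

theorem exists_isLUB_atomSet [Finite L] {T : Finset A} {l : L}
    (h : ∀ a ∈ T, (atom a : L) ≤ l) : ∃ j, IsLUB (atomSet atom T) j :=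
  exists_isLUB_of_bddAbove ⟨l, mem_upperBounds_atomSet.2 h⟩

theorem le_of_forall_atom_le (hat : AtomicRk rk) {l l' : L}
    (h : ∀ a, (atom a : L) ≤ l → (atom a : L) ≤ l') : l ≤ l' :=
  (hat l).2 fun x ⟨hx, hxl⟩ => by simpa using h (atom.symm ⟨x, hx⟩) (by simpa using hxl)

theorem isLUB_atomSet_of_forall_le_iff (hat : AtomicRk rk) {T : Finset A} {l : L}
    (h : ∀ a, (atom a : L) ≤ l ↔ a ∈ T) : IsLUB (atomSet atom T) l :=
  ⟨mem_upperBounds_atomSet.2 fun a ha => (h a).2 ha,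
    fun _ hu => le_of_forall_atom_le hat fun a ha => mem_upperBounds_atomSet.1 hu a ((h a).1 ha)⟩

theorem RankSubmodular.rk_le_of_isLUB_insert (hgeo : RankSubmodular rk) {s : Set L} {x j j' : L}
    (hs : IsLUB s j) (hx : rk x = 1) (h : IsLUB (insert x s) j') : rk j' ≤ rk j + 1 := by
  rw [Set.insert_eq, isLUB_union_congr hs isLUB_singleton, Set.union_comm, ← Set.insert_eq] at h
  have := hgeo j x j' h
  omega

theorem RankSubmodular.rk_le_add_card [Finite L] [DecidableEq A] (hgeo : RankSubmodular rk)
    {s : Set L} {j : L} (hs : IsLUB s j) (U : Finset A) {j' : L}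
    (h : IsLUB (s ∪ atomSet atom U) j') : rk j' ≤ rk j + #U := by
  induction U using Finset.induction_on generalizing j' with
  | empty => simp [hs.unique (by simpa [atomSet] using h)]
  | @insert a U haU ih =>
    rw [atomSet_insert, Set.union_insert] at h
    obtain ⟨j'', hj''⟩ := exists_isLUB_of_bddAbove ⟨j', fun x hx => h.1 (Or.inr hx)⟩
    have := hgeo.rk_le_of_isLUB_insert hj'' (atom a).2 h
    have := ih hj''
    rw [card_insert_of_notMem haU]
    omega

variable [OrderBot L] [Finite L]

theorem RankSubmodular.rk_le_card (h0 : rk ⊥ = 0) (hgeo : RankSubmodular rk) {T : Finset A}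
    {j : L} (h : IsLUB (atomSet atom T) j) : rk j ≤ #T := by
  classical
  simpa [h0] using hgeo.rk_le_add_card isLUB_empty T (by rwa [Set.empty_union])

theorem RankSubmodular.rk_eq_card_of_subset [DecidableEq A] (h0 : rk ⊥ = 0)
    (hgeo : RankSubmodular rk) {S T : Finset A} (hST : S ⊆ T) {i j : L}
    (hS : IsLUB (atomSet atom S) i) (hT : IsLUB (atomSet atom T) j) (hj : rk j = #T) :
    rk i = #S := by
  have h₁ : rk j ≤ rk i + #(T \ S) :=
    hgeo.rk_le_add_card hS _ (by rwa [← atomSet_union, union_sdiff_of_subset hST])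
  have h₂ := hgeo.rk_le_card h0 hS
  have h₃ := card_sdiff_add_card_eq_card hST
  omega

theorem RankSubmodular.exists_subset_isLUB_card_eq_rk [DecidableEq A] (h0 : rk ⊥ = 0)
    (hm : RankStrictMono rk) (hgeo : RankSubmodular rk) (T : Finset A) {l : L}
    (hT : IsLUB (atomSet atom T) l) : ∃ S ⊆ T, IsLUB (atomSet atom S) l ∧ #S = rk l := by
  induction T using Finset.induction_on generalizing l with
  | empty =>
    obtain rfl : l = ⊥ := hT.unique (by simp [atomSet])
    exact ⟨∅, subset_rfl, by simp [atomSet], by simp [h0]⟩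
  | @insert a T haT ih =>
    rw [atomSet_insert] at hT
    obtain ⟨j, hj⟩ := exists_isLUB_of_bddAbove ⟨l, fun x hx => hT.1 (Or.inr hx)⟩
    obtain ⟨S, hST, hS, hcard⟩ := ih hj
    by_cases haj : (atom a : L) ≤ j
    · obtain rfl : l = j := hT.unique
        ⟨fun x hx => hx.elim (· ▸ haj) (hj.1 ·), fun u hu => hj.2 fun x hx => hu (Or.inr hx)⟩
      exact ⟨S, hST.trans (subset_insert a T), hS, hcard⟩
    · have hSl : IsLUB (insert (atom a : L) (atomSet atom S)) l := by
        rwa [Set.insert_eq, isLUB_union_congr hS hj, ← Set.insert_eq]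
      have hjl : j < l := lt_of_le_of_ne (hj.2 fun x hx => hT.1 (Or.inr hx))
        fun h => haj (h ▸ hT.1 (Or.inl rfl))
      have := hm j l hjl
      have := hgeo.rk_le_of_isLUB_insert hS (atom a).2 hSl
      refine ⟨insert a S, insert_subset_insert a hST, by rwa [atomSet_insert], ?_⟩
      rw [card_insert_of_notMem fun h => haT (hST h)]
      omega

theorem RankSubmodular.exists_isLUB_card_eq_rk [Fintype A] (h0 : rk ⊥ = 0)
    (hm : RankStrictMono rk) (hat : AtomicRk rk) (hgeo : RankSubmodular rk) (l : L) :
    ∃ T : Finset A, IsLUB (atomSet atom T) l ∧ #T = rk l := by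
  classical
  obtain ⟨T, -, hT⟩ := hgeo.exists_subset_isLUB_card_eq_rk h0 hm {a | (atom a : L) ≤ l}
    (isLUB_atomSet_of_forall_le_iff (atom := atom) (l := l) hat fun a => by simp)
  exact ⟨T, hT⟩

theorem RankSubmodular.eq_of_isLUB_eq [DecidableEq A] (h0 : rk ⊥ = 0)
    (hgeo : RankSubmodular rk) {S T U : Finset A} {j l : L} (hS : IsLUB (atomSet atom S) j)
    (hT : IsLUB (atomSet atom T) j) (hSj : rk j = #S) (hTj : rk j = #T)
    (hU : IsLUB (atomSet atom U) l) (hl : rk l = #U) (hSTU : S ∪ T ⊆ U) : S = T := by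
  have hST : IsLUB (atomSet atom (S ∪ T)) j := by
    rw [atomSet_union, isLUB_union_congr hT hS, Set.union_self]
    exact hS
  have hcard := hgeo.rk_eq_card_of_subset h0 hSTU hST hU hl
  have hTS : T ⊆ S :=
    union_eq_left.1 (eq_of_subset_of_card_le (subset_union_left : S ⊆ S ∪ T) (by omega)).symm
  exact (eq_of_subset_of_card_le hTS (by omega)).symm

theorem RankSubmodular.disjoint_of_isLUB_eq [DecidableEq A] (h0 : rk ⊥ = 0)
    (hgeo : RankSubmodular rk) {R S T : Finset A} {j l : L} (hS : IsLUB (atomSet atom S) j)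
    (hT : IsLUB (atomSet atom T) j) (hST : #S = #T) (hRS : IsLUB (atomSet atom (R ∪ S)) l)
    (hl : rk l = #R + #S) : Disjoint R T := by
  rw [atomSet_union, isLUB_union_congr hS hT, ← atomSet_union] at hRS
  have := hgeo.rk_le_card h0 hRS
  have := card_union_le R T
  exact card_union_eq_card_add_card.1 (by omega)

end Lattice

section Monomial

variable [Fintype A]

def supp (v : A → ℕ) : Finset A := {a | 0 < v a}

@[simp] theorem mem_supp {v : A → ℕ} {a : A} : a ∈ supp v ↔ 0 < v a := by simp [supp]

theorem supp_mono {v w : A → ℕ} (h : v ≤ w) : supp v ⊆ supp w := fun a ha =>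
  mem_supp.2 ((mem_supp.1 ha).trans_le (h a))

theorem supp_add [DecidableEq A] (u v : A → ℕ) : supp (u + v) = supp u ∪ supp v := by
  ext a; simp

theorem sum_eq_card_supp {v : A → ℕ} (hv : ∀ a, v a ≤ 1) : ∑ a, v a = #(supp v) := by
  rw [supp, card_filter]
  exact sum_congr rfl fun a _ => by have := hv a; split_ifs <;> omega

theorem eq_of_supp_eq {v w : A → ℕ} (hv : ∀ a, v a ≤ 1) (hw : ∀ a, w a ≤ 1)
    (h : supp v = supp w) : v = w := by
  funext a
  have := congrArg (a ∈ ·) h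
  simp only [mem_supp, eq_iff_iff] at this
  have := hv a; have := hw a
  omega

theorem forall_add_le_one_iff {u v : A → ℕ} : (∀ a, (u + v) a ≤ 1) ↔
    (∀ a, u a ≤ 1) ∧ (∀ a, v a ≤ 1) ∧ Disjoint (supp u) (supp v) := by
  simp only [Pi.add_apply, Finset.disjoint_left, mem_supp, not_lt, Nat.le_zero]
  refine ⟨fun h => ⟨fun a => ?_, fun a => ?_, fun a hu => ?_⟩, fun ⟨hu, hv, h⟩ a => ?_⟩
  · have := h a; omega
  · have := h a; omega
  · have := h a; omega
  · have := hu a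
    have := hv a
    rcases Nat.eq_zero_or_pos (u a) with hua | hua
    · omega
    · have := h hua; omega

theorem sum_add_single [DecidableEq A] (m : A → ℕ) (a : A) :
    ∑ b, (m + Pi.single a 1 : A → ℕ) b = ∑ b, m b + 1 := by
  simp [sum_add_distrib]

end Monomial

theorem forall_le_one_or_exists_one_lt (v : A → ℕ) : (∀ a, v a ≤ 1) ∨ ∃ c, 1 < v c := by
  simpa only [not_forall, not_le] using em (∀ a, v a ≤ 1)

theorem sub_single_add_single [DecidableEq A] {m : A → ℕ} {b : A} (h : 0 < m b) :
    m - Pi.single b 1 + Pi.single b 1 = m := by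
  funext a
  by_cases hab : a = b
  · subst hab; simp; omega
  · simp [hab]

section GradedJoin

variable [Fintype A] [DecidableEq A] {P : Set (A → ℕ)} {ρ : (A → ℕ) → ℕ}

/-- `some p` when `x^v` survives in `k[P]`, where it represents `p`; `none` when `x^v` lies in
`I₀ + I₁ + I₂`. -/
noncomputable def gradedJoin (P : Set (A → ℕ)) (ρ : (A → ℕ) → ℕ) (v : A → ℕ) :
    Option (A → ℕ) :=
  open Classical in
  if h : ∃ p, JoinP P v p ∧ ρ p = ∑ a, v a then some h.choose else none

theorem gradedJoin_eq_some_iff {v p : A → ℕ} :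
    gradedJoin P ρ v = some p ↔ JoinP P v p ∧ ρ p = ∑ a, v a := by
  unfold gradedJoin
  split_ifs with h
  · rw [Option.some_inj]
    exact ⟨fun hp => hp ▸ h.choose_spec, fun hp => h.choose_spec.1.unique hp.1⟩
  · simpa using fun hp hρ => h ⟨p, hp, hρ⟩

theorem gradedJoin_eq_none_iff {v : A → ℕ} :
    gradedJoin P ρ v = none ↔ ∀ p, JoinP P v p → ρ p ≠ ∑ a, v a := by
  simp [Option.eq_none_iff_forall_ne_some, gradedJoin_eq_some_iff]

theorem gradedJoin_eq_none_iff_of_le {r : A → ℕ} (hr : ∀ a, ∀ m ∈ P, m a ≤ r a) {v : A → ℕ} :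
    gradedJoin P ρ v = none ↔ (∃ a, r a < v a) ∨ ((∀ a, v a ≤ r a) ∧ ¬ ∃ p, JoinP P v p) ∨
      ∃ p, JoinP P v p ∧ ρ p ≠ ∑ a, v a := by
  rw [gradedJoin_eq_none_iff]
  constructor
  · intro h
    by_cases hrv : ∃ a, r a < v a
    · exact .inl hrv
    by_cases hj : ∃ p, JoinP P v p
    · obtain ⟨p, hp⟩ := hj
      exact .inr (.inr ⟨p, hp, h p hp⟩)
    · exact .inr (.inl ⟨by simpa using hrv, hj⟩)
  · rintro (⟨a, ha⟩ | ⟨-, hj⟩ | ⟨p, hp, hρ⟩) p' hp'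
    · exact absurd ((hp'.le a).trans (hr a p' hp'.1)) (not_le.2 ha)
    · exact absurd ⟨p', hp'⟩ hj
    · exact hp.unique hp' ▸ hρ

end GradedJoin

section Generators

variable [Fintype A] [DecidableEq A] (P : Set (A → ℕ)) (ρ : (A → ℕ) → ℕ) (rexp : A → ℕ)
  (k : Type*) [Field k]

/-- The generators of `I₀`, `I₁`, `I₂` and `I₃`, in this order. -/
def generators : Set (MvPolynomial A k) :=
  {x | ∃ v : A → ℕ, (∃ a : A, rexp a < v a) ∧
    x = MvPolynomial.monomial (Finsupp.equivFunOnFinite.symm v) 1} ∪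
  {x | ∃ v : A → ℕ, (∀ a : A, v a ≤ rexp a) ∧ (¬ ∃ p : A → ℕ, JoinP P v p) ∧
    x = MvPolynomial.monomial (Finsupp.equivFunOnFinite.symm v) 1} ∪
  {x | ∃ v : A → ℕ, (∃ p : A → ℕ, JoinP P v p ∧ ρ p ≠ ∑ a : A, v a) ∧
    x = MvPolynomial.monomial (Finsupp.equivFunOnFinite.symm v) 1} ∪
  {x | ∃ v w : A → ℕ, (∃ p : A → ℕ, JoinP P v p ∧ JoinP P w p ∧
    ρ p = ∑ a : A, v a ∧ (∑ a : A, v a) = ∑ a : A, w a) ∧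
    x = MvPolynomial.monomial (Finsupp.equivFunOnFinite.symm v) 1 -
      MvPolynomial.monomial (Finsupp.equivFunOnFinite.symm w) 1}

variable {P ρ rexp k}

theorem generators_cases (hrexp : ∀ a, ∀ m ∈ P, m a ≤ rexp a) {s : MvPolynomial A k}
    (hs : s ∈ generators P ρ rexp k) :
    (∃ e : A →₀ ℕ, gradedJoin P ρ e = none ∧ s = MvPolynomial.monomial e 1) ∨
      ∃ e f : A →₀ ℕ, gradedJoin P ρ e = gradedJoin P ρ f ∧
        s = MvPolynomial.monomial e 1 - MvPolynomial.monomial f 1 := by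
  have hnone : ∀ v : A → ℕ, gradedJoin P ρ ⇑(Finsupp.equivFunOnFinite.symm v) = none ↔ _ :=
    fun v => by rw [Finsupp.coe_equivFunOnFinite_symm, gradedJoin_eq_none_iff_of_le hrexp]
  rcases hs with ((⟨v, hv, rfl⟩ | ⟨v, hv, hnj, rfl⟩) | ⟨v, hv, rfl⟩) |
    ⟨v, w, ⟨p, hvp, hwp, hρ, hsum⟩, rfl⟩
  · exact .inl ⟨_, (hnone v).2 (.inl hv), rfl⟩
  · exact .inl ⟨_, (hnone v).2 (.inr (.inl ⟨hv, hnj⟩)), rfl⟩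
  · exact .inl ⟨_, (hnone v).2 (.inr (.inr hv)), rfl⟩
  · refine .inr ⟨_, _, ?_, rfl⟩
    simp only [Finsupp.coe_equivFunOnFinite_symm]
    rw [gradedJoin_eq_some_iff.2 ⟨hvp, hρ⟩, gradedJoin_eq_some_iff.2 ⟨hwp, hρ.trans hsum⟩]

theorem monomial_mem_span_generators (hrexp : ∀ a, ∀ m ∈ P, m a ≤ rexp a) {e : A →₀ ℕ}
    (he : gradedJoin P ρ e = none) :
    MvPolynomial.monomial e (1 : k) ∈ Ideal.span (generators P ρ rexp k) := by
  rw [← Finsupp.equivFunOnFinite_symm_coe e]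
  apply Ideal.subset_span
  rcases (gradedJoin_eq_none_iff_of_le hrexp).1 he with h | h | h
  · exact .inl (.inl (.inl ⟨e, h, rfl⟩))
  · exact .inl (.inl (.inr ⟨e, h.1, h.2, rfl⟩))
  · exact .inl (.inr ⟨e, h, rfl⟩)

theorem monomial_sub_monomial_mem_span_generators {e f : A →₀ ℕ} {p : A → ℕ}
    (he : gradedJoin P ρ e = some p) (hf : gradedJoin P ρ f = some p) :
    MvPolynomial.monomial e (1 : k) - MvPolynomial.monomial f 1 ∈
      Ideal.span (generators P ρ rexp k) := by
  rw [← Finsupp.equivFunOnFinite_symm_coe e, ← Finsupp.equivFunOnFinite_symm_coe f]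
  obtain ⟨hep, hρe⟩ := gradedJoin_eq_some_iff.1 he
  obtain ⟨hfp, hρf⟩ := gradedJoin_eq_some_iff.1 hf
  exact Ideal.subset_span (.inr ⟨e, f, ⟨p, hep, hfp, hρe, hρe.symm.trans hρf⟩, rfl⟩)

end Generators

section Construction

variable [SemilatticeInf L] {rk : L → ℕ} {atom : A ≃ {a : L // rk a = 1}}

open Classical in
/-- The square-free monomial `m(l)` of the paper. -/
noncomputable def sqfreeMonomial (atom : A ≃ {a : L // rk a = 1}) (l : L) : A → ℕ :=
  fun a => if (atom a : L) ≤ l then 1 else 0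

theorem sqfreeMonomial_le_one (l : L) (a : A) : sqfreeMonomial atom l a ≤ 1 := by
  unfold sqfreeMonomial; split_ifs <;> omega

theorem sqfreeMonomial_pos_iff {l : L} {a : A} :
    0 < sqfreeMonomial atom l a ↔ (atom a : L) ≤ l := by
  unfold sqfreeMonomial; split_ifs with h <;> simp [h]

theorem sqfreeMonomial_injective (hat : AtomicRk rk) :
    Function.Injective (sqfreeMonomial (L := L) atom) := fun l l' h =>
  have hll' : ∀ a, (atom a : L) ≤ l ↔ (atom a : L) ≤ l' := fun a => by
    rw [← sqfreeMonomial_pos_iff, ← sqfreeMonomial_pos_iff, h]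
  le_antisymm (le_of_forall_atom_le hat fun a => (hll' a).1)
    (le_of_forall_atom_le hat fun a => (hll' a).2)

theorem eq_sqfreeMonomial [Fintype A] {v : A → ℕ} {l : L} (hv : ∀ a, v a ≤ 1)
    (h : ∀ a, (atom a : L) ≤ l ↔ 0 < v a) : v = sqfreeMonomial atom l :=
  eq_of_supp_eq hv (sqfreeMonomial_le_one l) (by ext a; simp [sqfreeMonomial_pos_iff, h])

variable [DecidableEq A]

/-- What the staged construction `M 0 ⊆ M 1 ⊆ ⋯` of `P ∈ 𝒫` guarantees, forgetting the stages. -/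
structure IsBuiltFrom (atom : A ≃ {a : L // rk a = 1}) (P : Set (A → ℕ)) : Prop where
  sqfreeMonomial_mem : ∀ l, sqfreeMonomial atom l ∈ P
  eq_sqfreeMonomial_or_step : ∀ m ∈ P, (∃ l, m = sqfreeMonomial atom l) ∨
    ∃ m' ∈ P, ∃ a, 0 < m' a ∧ (∀ b, 0 < m' b → m' + Pi.single a 1 - Pi.single b 1 ∈ P) ∧
      m = m' + Pi.single a 1

theorem isBuiltFrom_iUnion {M : ℕ → Set (A → ℕ)}
    (hM0 : M 0 = {v | ∃ l : L, v = sqfreeMonomial atom l})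
    (hstep : ∀ i : ℕ, M (i + 1) = M i ∨
      ∃ m ∈ M i, ∃ a : A, 0 < m a ∧
        (∀ b : A, 0 < m b → (m + Pi.single a 1 - Pi.single b 1) ∈ M i) ∧
        m + Pi.single a 1 ∉ M i ∧ M (i + 1) = M i ∪ {m + Pi.single a 1}) :
    IsBuiltFrom atom (⋃ i, M i) := by
  have hsub : ∀ i, M i ⊆ ⋃ i, M i := Set.subset_iUnion M
  refine ⟨fun l => hsub 0 (hM0 ▸ ⟨l, rfl⟩), fun m hm => ?_⟩
  obtain ⟨i, hi⟩ := Set.mem_iUnion.1 hm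
  induction i generalizing m with
  | zero => rw [hM0] at hi; exact .inl hi
  | succ i ih =>
    rcases hstep i with h | ⟨m', hm', a, ha, hext, -, h⟩
    · exact ih m (hsub i (h ▸ hi)) (h ▸ hi)
    · rw [h] at hi
      rcases hi with hi | rfl
      · exact ih m (hsub i hi) hi
      · exact .inr ⟨m', hsub i hm', a, ha, fun b hb => hsub i (hext b hb), rfl⟩

variable [Fintype A] {P : Set (A → ℕ)} {ρ : (A → ℕ) → ℕ}

theorem IsBuiltFrom.induction (hP : IsBuiltFrom atom P) {Q : (A → ℕ) → Prop}
    (base : ∀ l, Q (sqfreeMonomial atom l))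
    (step : ∀ m ∈ P, ∀ a, m + Pi.single a 1 ∈ P → 0 < m a →
      (∀ b, 0 < m b → m + Pi.single a 1 - Pi.single b 1 ∈ P) → Q m → Q (m + Pi.single a 1)) :
    ∀ m ∈ P, Q m := by
  intro m hm
  induction h : ∑ a, m a using Nat.strong_induction_on generalizing m with
  | _ n ih =>
    rcases hP.eq_sqfreeMonomial_or_step m hm with ⟨l, rfl⟩ | ⟨m', hm', a, ha, hext, rfl⟩
    · exact base l
    · rw [sum_add_single] at h
      exact step m' hm' a hm ha hext (ih _ (by omega) m' hm' rfl)

theorem IsBuiltFrom.sub_single_mem (hP : IsBuiltFrom atom P) {m : A → ℕ} (hm : m ∈ P)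
    (hc : ∃ c, 1 < m c) {b : A} (hb : 0 < m b) : m - Pi.single b 1 ∈ P := by
  refine hP.induction (Q := fun m => (∃ c, 1 < m c) → ∀ b, 0 < m b → m - Pi.single b 1 ∈ P)
    (fun l ⟨c, hc⟩ => absurd (sqfreeMonomial_le_one (atom := atom) l c) (by omega))
    (fun m hm a _ _ hext _ _ b hb => ?_) m hm hc b hb
  by_cases hba : b = a
  · subst hba; simpa using hm
  · exact hext b (by simpa [hba] using hb)

theorem IsBuiltFrom.mem_of_le (hP : IsBuiltFrom atom P) {m v : A → ℕ} (hm : m ∈ P) (hvm : v ≤ m)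
    (hv : ∃ c, 1 < v c) : v ∈ P := by
  induction h : ∑ a, m a using Nat.strong_induction_on generalizing m with
  | _ n ih =>
    by_cases hveq : v = m
    · exact hveq ▸ hm
    obtain ⟨b, hb⟩ : ∃ b, v b < m b := by
      by_contra! hle
      exact hveq (le_antisymm hvm hle)
    obtain ⟨c, hc⟩ := hv
    have hm' := hP.sub_single_mem hm ⟨c, hc.trans_le (hvm c)⟩ (b := b) (by omega)
    have hsum := sum_add_single (m - Pi.single b 1) b
    rw [sub_single_add_single (by omega), h] at hsum
    refine ih _ (by omega) hm' (fun a => ?_) rfl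
    by_cases hab : a = b
    · subst hab; simp; omega
    · simpa [hab] using hvm a

theorem IsBuiltFrom.exists_flat (hP : IsBuiltFrom atom P) {m : A → ℕ} (hm : m ∈ P) :
    ∃ l, ∀ a, (atom a : L) ≤ l ↔ 0 < m a := by
  refine hP.induction (Q := fun m => ∃ l, ∀ a, (atom a : L) ≤ l ↔ 0 < m a)
    (fun l => ⟨l, fun a => sqfreeMonomial_pos_iff.symm⟩)
    (fun m _ a _ ha _ ⟨l, hl⟩ => ⟨l, fun b => ?_⟩) m hm
  by_cases hba : b = a
  · subst hba; simpa [hl] using ha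
  · simpa [hba] using hl b

theorem IsBuiltFrom.exists_flat_of_subset (hP : IsBuiltFrom atom P) {m : A → ℕ} (hm : m ∈ P)
    {c : A} (hc : 1 < m c) {W : Finset A} (hcW : c ∈ W) (hW : W ⊆ supp m) :
    ∃ l, ∀ a, (atom a : L) ≤ l ↔ a ∈ W := by
  classical
  let z : A → ℕ := fun a => if a ∈ W then m a else 0
  have hz : z ∈ P :=
    hP.mem_of_le hm (fun a => by dsimp [z]; split_ifs <;> omega) ⟨c, by simpa [z, hcW]⟩
  obtain ⟨l, hl⟩ := hP.exists_flat hz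
  refine ⟨l, fun a => (hl a).trans ?_⟩
  by_cases ha : a ∈ W
  · simp [z, ha, mem_supp.1 (hW ha)]
  · simp [z, ha]

/-- Adding the elements of `U` to `{c}` one at a time climbs a strict chain of flats, since every
subset of `supp m` containing `c` is a flat. -/
theorem IsBuiltFrom.card_lt_rk (hm : RankStrictMono rk) (hat : AtomicRk rk)
    (hP : IsBuiltFrom atom P) {m : A → ℕ} (hmP : m ∈ P) {c : A} (hc : 1 < m c) (U : Finset A)
    (hcU : c ∉ U) (hU : insert c U ⊆ supp m) {l : L}
    (hl : ∀ a, (atom a : L) ≤ l ↔ a ∈ insert c U) : #U < rk l := by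
  induction U using Finset.induction_on generalizing l with
  | empty =>
    have := hm.monotone ((hl c).2 (mem_insert_self c ∅))
    rw [(atom c).2] at this
    exact this
  | @insert b U hbU ih =>
    have hcb : c ≠ b := fun h => hcU (h ▸ mem_insert_self b U)
    have hsub : insert c U ⊆ insert c (insert b U) := insert_subset_insert c (subset_insert b U)
    obtain ⟨l', hl'⟩ := hP.exists_flat_of_subset hmP hc (mem_insert_self c U) (hsub.trans hU)
    have hrk := ih (fun h => hcU (mem_insert_of_mem h)) (hsub.trans hU) hl'
    have hle : l' ≤ l := le_of_forall_atom_le hat fun a ha => (hl a).2 (hsub ((hl' a).1 ha))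
    have hne : l' ≠ l := fun h => by
      have := (hl' b).1 (h ▸ (hl b).2 (by simp))
      simp [hbU, hcb.symm] at this
    have := hm l' l (lt_of_le_of_ne hle hne)
    rw [card_insert_of_notMem hbU]
    omega

theorem IsBuiltFrom.joinP_iff_of_one_lt (hP : IsBuiltFrom atom P) {v p : A → ℕ}
    (hv : ∃ c, 1 < v c) : JoinP P v p ↔ v ∈ P ∧ p = v := by
  refine ⟨fun h => ?_, fun ⟨hvP, hp⟩ => ?_⟩
  · have hvP := hP.mem_of_le h.1 h.le hv
    exact ⟨hvP, le_antisymm (h.2.2 v hvP (forall_single_le_iff.2 le_rfl)) h.le⟩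
  · exact joinP_iff_isLeast.2 (hp.symm ▸ ⟨⟨hvP, le_rfl⟩, fun _ hq => hq.2⟩)

theorem IsBuiltFrom.joinP_sqfreeMonomial (hP : IsBuiltFrom atom P) {v : A → ℕ}
    (hv : ∀ a, v a ≤ 1) {j : L} (hj : IsLUB (atomSet atom (supp v)) j) :
    JoinP P v (sqfreeMonomial atom j) := by
  refine joinP_iff_isLeast.2 ⟨⟨hP.sqfreeMonomial_mem j, fun a => ?_⟩, fun q ⟨hq, hvq⟩ a => ?_⟩
  · rcases Nat.eq_zero_or_pos (v a) with ha | ha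
    · simp [ha]
    · exact (hv a).trans
        (sqfreeMonomial_pos_iff.2 (mem_upperBounds_atomSet.1 hj.1 a (mem_supp.2 ha)))
  · obtain ⟨l, hl⟩ := hP.exists_flat hq
    have hjl : j ≤ l := hj.2 (mem_upperBounds_atomSet.2 fun b hb =>
      (hl b).2 ((mem_supp.1 hb).trans_le (hvq b)))
    rcases Nat.eq_zero_or_pos (sqfreeMonomial atom j a) with ha | ha
    · simp [ha]
    · exact (sqfreeMonomial_le_one j a).trans ((hl a).1 ((sqfreeMonomial_pos_iff.1 ha).trans hjl))

variable [Finite L]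

theorem IsBuiltFrom.exists_isLUB_supp (hP : IsBuiltFrom atom P) {q v : A → ℕ} (hq : q ∈ P)
    (hvq : v ≤ q) : ∃ j, IsLUB (atomSet atom (supp v)) j := by
  obtain ⟨l, hl⟩ := hP.exists_flat hq
  exact exists_isLUB_atomSet fun a ha => (hl a).2 ((mem_supp.1 ha).trans_le (hvq a))

theorem IsBuiltFrom.joinP_iff_of_le_one (hP : IsBuiltFrom atom P) {v p : A → ℕ}
    (hv : ∀ a, v a ≤ 1) :
    JoinP P v p ↔ ∃ j, IsLUB (atomSet atom (supp v)) j ∧ p = sqfreeMonomial atom j := by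
  refine ⟨fun h => ?_, fun ⟨j, hj, hp⟩ => hp ▸ hP.joinP_sqfreeMonomial hv hj⟩
  obtain ⟨j, hj⟩ := hP.exists_isLUB_supp h.1 h.le
  exact ⟨j, hj, h.unique (hP.joinP_sqfreeMonomial hv hj)⟩

theorem IsBuiltFrom.le_one_of_joinP (hP : IsBuiltFrom atom P) {v p : A → ℕ} (h : JoinP P v p)
    (hv : ∀ a, v a ≤ 1) (a : A) : p a ≤ 1 := by
  obtain ⟨j, -, rfl⟩ := (hP.joinP_iff_of_le_one hv).1 h
  exact sqfreeMonomial_le_one j a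

variable [OrderBot L]

theorem IsBuiltFrom.rk_eq_card_supp (h0 : rk ⊥ = 0) (hm : RankStrictMono rk) (hat : AtomicRk rk)
    (hgeo : RankSubmodular rk) (hP : IsBuiltFrom atom P) {m : A → ℕ} (hmP : m ∈ P) {c : A}
    (hc : 1 < m c) {l : L} (hl : ∀ a, (atom a : L) ≤ l ↔ 0 < m a) : rk l = #(supp m) := by
  have hcm : c ∈ supp m := mem_supp.2 (by omega)
  have hl' : ∀ a, (atom a : L) ≤ l ↔ a ∈ supp m := fun a => (hl a).trans mem_supp.symm
  have hge := hP.card_lt_rk hm hat hmP hc _ (notMem_erase c _) (by rw [insert_erase hcm])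
    (l := l) (by rwa [insert_erase hcm])
  have hle := hgeo.rk_le_card h0 (isLUB_atomSet_of_forall_le_iff hat hl')
  rw [card_erase_of_mem hcm] at hge
  omega

theorem IsBuiltFrom.rho_eq_sum (h0 : rk ⊥ = 0) (hm : RankStrictMono rk) (hat : AtomicRk rk)
    (hgeo : RankSubmodular rk) (hP : IsBuiltFrom atom P)
    (hρ0 : ∀ l, ρ (sqfreeMonomial atom l) = rk l)
    (hρs : ∀ m ∈ P, ∀ a, m + Pi.single a 1 ∈ P → ρ (m + Pi.single a 1) = ρ m + 1)
    {m : A → ℕ} (hmP : m ∈ P) (hc : ∃ c, 1 < m c) : ρ m = ∑ a, m a := by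
  refine hP.induction (Q := fun m => (∃ c, 1 < m c) → ρ m = ∑ a, m a)
    (fun l ⟨c, hc⟩ => absurd (sqfreeMonomial_le_one (atom := atom) l c) (by omega))
    (fun m hmP a hma ha _ ih _ => ?_) m hmP hc
  rw [hρs m hmP a hma, sum_add_single]
  rcases forall_le_one_or_exists_one_lt m with hsf | hnsf
  · obtain ⟨l, hl⟩ := hP.exists_flat hmP
    have hsupp : supp (m + Pi.single a 1) = supp m := by
      ext b
      by_cases hba : b = a
      · subst hba; simp [ha]
      · simp [hba]
    have hl' : ∀ b, (atom b : L) ≤ l ↔ 0 < (m + Pi.single a 1 : A → ℕ) b := fun b => by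
      rw [hl, ← mem_supp, ← mem_supp, hsupp]
    have hρm : ρ m = rk l := by rw [eq_sqfreeMonomial hsf hl, hρ0]
    rw [hρm, hP.rk_eq_card_supp h0 hm hat hgeo hma (c := a) (by simp; omega) hl', hsupp,
      sum_eq_card_supp hsf]
  · rw [ih hnsf]

theorem IsBuiltFrom.rk_eq_card_of_joinP (h0 : rk ⊥ = 0) (hm : RankStrictMono rk)
    (hat : AtomicRk rk) (hgeo : RankSubmodular rk) (hP : IsBuiltFrom atom P)
    (hρ0 : ∀ l, ρ (sqfreeMonomial atom l) = rk l) {w q : A → ℕ}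
    (hw : JoinP P w q) (hρ : ρ q = ∑ a, w a) {j : L} (hj : IsLUB (atomSet atom (supp w)) j) :
    rk j = #(supp w) := by
  rcases forall_le_one_or_exists_one_lt w with hsf | ⟨c, hc⟩
  · obtain ⟨j', hj', rfl⟩ := (hP.joinP_iff_of_le_one hsf).1 hw
    rw [hj.unique hj', ← hρ0, hρ, sum_eq_card_supp hsf]
  · obtain ⟨hwP, -⟩ := (hP.joinP_iff_of_one_lt ⟨c, hc⟩).1 hw
    obtain ⟨l, hl⟩ := hP.exists_flat hwP
    rw [hj.unique (isLUB_atomSet_of_forall_le_iff hat fun a => (hl a).trans mem_supp.symm)]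
    exact hP.rk_eq_card_supp h0 hm hat hgeo hwP hc hl

theorem IsBuiltFrom.exists_joinP_rank_of_le (h0 : rk ⊥ = 0) (hm : RankStrictMono rk)
    (hat : AtomicRk rk) (hgeo : RankSubmodular rk) (hP : IsBuiltFrom atom P)
    (hρ0 : ∀ l, ρ (sqfreeMonomial atom l) = rk l)
    (hρs : ∀ m ∈ P, ∀ a, m + Pi.single a 1 ∈ P → ρ (m + Pi.single a 1) = ρ m + 1) {v w q : A → ℕ}
    (hvw : v ≤ w) (hw : JoinP P w q) (hρ : ρ q = ∑ a, w a) :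
    ∃ p, JoinP P v p ∧ ρ p = ∑ a, v a := by
  rcases forall_le_one_or_exists_one_lt v with hsf | hnsf
  · obtain ⟨jw, hjw⟩ := hP.exists_isLUB_supp hw.1 hw.le
    obtain ⟨jv, hjv⟩ := hP.exists_isLUB_supp hw.1 (hvw.trans hw.le)
    refine ⟨_, hP.joinP_sqfreeMonomial hsf hjv, ?_⟩
    rw [hρ0, sum_eq_card_supp hsf]
    exact hgeo.rk_eq_card_of_subset h0 (supp_mono hvw) hjv hjw
      (hP.rk_eq_card_of_joinP h0 hm hat hgeo hρ0 hw hρ hjw)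
  · have hvP := hP.mem_of_le hw.1 (hvw.trans hw.le) hnsf
    exact ⟨v, (hP.joinP_iff_of_one_lt hnsf).2 ⟨hvP, rfl⟩,
      hP.rho_eq_sum h0 hm hat hgeo hρ0 hρs hvP hnsf⟩

theorem IsBuiltFrom.joinP_add_of_le_one (h0 : rk ⊥ = 0) (hm : RankStrictMono rk)
    (hat : AtomicRk rk) (hgeo : RankSubmodular rk) (hP : IsBuiltFrom atom P)
    (hρ0 : ∀ l, ρ (sqfreeMonomial atom l) = rk l) {u v w p q : A → ℕ}
    (hv : ∀ a, v a ≤ 1) (hw : ∀ a, w a ≤ 1) (hvp : JoinP P v p) (hwp : JoinP P w p)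
    (hρ : ρ p = ∑ a, v a) (hsum : ∑ a, v a = ∑ a, w a) (hq : JoinP P (u + v) q)
    (hρq : ρ q = ∑ a, (u + v) a) : JoinP P (u + w) q := by
  obtain ⟨j, hj, rfl⟩ := (hP.joinP_iff_of_le_one hv).1 hvp
  obtain ⟨j', hj', hjj'⟩ := (hP.joinP_iff_of_le_one hw).1 hwp
  obtain rfl := sqfreeMonomial_injective hat hjj'
  have hjv : rk j = #(supp v) := by rw [← hρ0, hρ, sum_eq_card_supp hv]
  have hjw : rk j = #(supp w) := by rw [hjv, ← sum_eq_card_supp hv, hsum, sum_eq_card_supp hw]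
  rcases forall_le_one_or_exists_one_lt (u + v) with huv | ⟨c, hc⟩
  · -- Counting ranks, `supp u` misses `supp w`, so `u + w` is square-free with the same span.
    obtain ⟨j₁, hj₁, rfl⟩ := (hP.joinP_iff_of_le_one huv).1 hq
    obtain ⟨hu, -, huv_disj⟩ := forall_add_le_one_iff.1 huv
    have hrk : rk j₁ = #(supp u) + #(supp v) := by
      rw [← hρ0, hρq, sum_eq_card_supp huv, supp_add, card_union_of_disjoint huv_disj]
    have huw_disj := hgeo.disjoint_of_isLUB_eq h0 hj hj' (hjv ▸ hjw) (supp_add u v ▸ hj₁) hrk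
    have huw := forall_add_le_one_iff.2 ⟨hu, hw, huw_disj⟩
    refine (hP.joinP_iff_of_le_one huw).2 ⟨j₁, ?_, rfl⟩
    rwa [supp_add, atomSet_union, isLUB_union_congr hj' hj, ← atomSet_union, ← supp_add]
  · -- `supp v` and `supp w` span the same flat inside the independent set `supp (u + v)`.
    obtain ⟨huvP, rfl⟩ := (hP.joinP_iff_of_one_lt ⟨c, hc⟩).1 hq
    obtain ⟨l, hl⟩ := hP.exists_flat huvP
    have hvsub : supp v ⊆ supp (u + v) := supp_mono le_add_self
    have hjl : j ≤ l :=
      hj.2 (mem_upperBounds_atomSet.2 fun a ha => (hl a).2 (mem_supp.1 (hvsub ha)))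
    have hwsub : supp w ⊆ supp (u + v) := fun a ha =>
      mem_supp.2 ((hl a).1 ((mem_upperBounds_atomSet.1 hj'.1 a ha).trans hjl))
    have hvw := hgeo.eq_of_isLUB_eq h0 hj hj' hjv hjw
      (isLUB_atomSet_of_forall_le_iff hat fun a => (hl a).trans mem_supp.symm)
      (hP.rk_eq_card_supp h0 hm hat hgeo huvP hc hl) (union_subset hvsub hwsub)
    rwa [← eq_of_supp_eq hv hw hvw]

theorem IsBuiltFrom.joinP_add_of_joinP_eq (h0 : rk ⊥ = 0) (hm : RankStrictMono rk)
    (hat : AtomicRk rk) (hgeo : RankSubmodular rk) (hP : IsBuiltFrom atom P)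
    (hρ0 : ∀ l, ρ (sqfreeMonomial atom l) = rk l) {u v w p q : A → ℕ}
    (hvp : JoinP P v p) (hwp : JoinP P w p)
    (hρ : ρ p = ∑ a, v a) (hsum : ∑ a, v a = ∑ a, w a) (hq : JoinP P (u + v) q)
    (hρq : ρ q = ∑ a, (u + v) a) : JoinP P (u + w) q := by
  rcases forall_le_one_or_exists_one_lt v with hv | ⟨c, hc⟩ <;>
    rcases forall_le_one_or_exists_one_lt w with hw | ⟨d, hd⟩
  · exact hP.joinP_add_of_le_one h0 hm hat hgeo hρ0 hv hw hvp hwp hρ hsum hq hρq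
  · obtain ⟨-, rfl⟩ := (hP.joinP_iff_of_one_lt ⟨d, hd⟩).1 hwp
    exact absurd (hP.le_one_of_joinP hvp hv d) (by omega)
  · obtain ⟨-, rfl⟩ := (hP.joinP_iff_of_one_lt ⟨c, hc⟩).1 hvp
    exact absurd (hP.le_one_of_joinP hwp hw c) (by omega)
  · obtain ⟨-, rfl⟩ := (hP.joinP_iff_of_one_lt ⟨c, hc⟩).1 hvp
    obtain ⟨-, rfl⟩ := (hP.joinP_iff_of_one_lt ⟨d, hd⟩).1 hwp
    exact hq

theorem IsBuiltFrom.gradedJoin_add_eq_none (h0 : rk ⊥ = 0) (hm : RankStrictMono rk)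
    (hat : AtomicRk rk) (hgeo : RankSubmodular rk) (hP : IsBuiltFrom atom P)
    (hρ0 : ∀ l, ρ (sqfreeMonomial atom l) = rk l)
    (hρs : ∀ m ∈ P, ∀ a, m + Pi.single a 1 ∈ P → ρ (m + Pi.single a 1) = ρ m + 1)
    {v : A → ℕ} (hv : gradedJoin P ρ v = none) (u : A → ℕ) : gradedJoin P ρ (u + v) = none := by
  rw [gradedJoin_eq_none_iff] at hv ⊢
  intro q hq hρq
  obtain ⟨p, hp, hρp⟩ := hP.exists_joinP_rank_of_le h0 hm hat hgeo hρ0 hρs le_add_self hq hρq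
  exact hv p hp hρp

theorem IsBuiltFrom.gradedJoin_add_congr (h0 : rk ⊥ = 0) (hm : RankStrictMono rk)
    (hat : AtomicRk rk) (hgeo : RankSubmodular rk) (hP : IsBuiltFrom atom P)
    (hρ0 : ∀ l, ρ (sqfreeMonomial atom l) = rk l)
    (hρs : ∀ m ∈ P, ∀ a, m + Pi.single a 1 ∈ P → ρ (m + Pi.single a 1) = ρ m + 1)
    {v w : A → ℕ} (h : gradedJoin P ρ v = gradedJoin P ρ w) (u : A → ℕ) :
    gradedJoin P ρ (u + v) = gradedJoin P ρ (u + w) := by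
  cases hv : gradedJoin P ρ v with
  | none =>
    rw [hP.gradedJoin_add_eq_none h0 hm hat hgeo hρ0 hρs hv,
      hP.gradedJoin_add_eq_none h0 hm hat hgeo hρ0 hρs (h ▸ hv)]
  | some p =>
    have key : ∀ {v w}, gradedJoin P ρ v = some p → gradedJoin P ρ w = some p →
        ∀ q, gradedJoin P ρ (u + v) = some q → gradedJoin P ρ (u + w) = some q := by
      intro v w hv hw q hq
      rw [gradedJoin_eq_some_iff] at hv hw hq ⊢
      have hsum : ∑ a, v a = ∑ a, w a := hv.2.symm.trans hw.2
      refine ⟨hP.joinP_add_of_joinP_eq h0 hm hat hgeo hρ0 hv.1 hw.1 hv.2 hsum hq.1 hq.2, ?_⟩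
      simp only [hq.2, Pi.add_apply, sum_add_distrib, hsum]
    exact Option.ext fun q => ⟨key hv (h ▸ hv) q, key (h ▸ hv) hv q⟩

theorem IsBuiltFrom.exists_gradedJoin_eq_some (h0 : rk ⊥ = 0) (hm : RankStrictMono rk)
    (hat : AtomicRk rk) (hgeo : RankSubmodular rk) (hP : IsBuiltFrom atom P)
    (hρ0 : ∀ l, ρ (sqfreeMonomial atom l) = rk l)
    (hρs : ∀ m ∈ P, ∀ a, m + Pi.single a 1 ∈ P → ρ (m + Pi.single a 1) = ρ m + 1)
    {p : A → ℕ} (hp : p ∈ P) : ∃ v, gradedJoin P ρ v = some p := by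
  simp_rw [gradedJoin_eq_some_iff]
  rcases forall_le_one_or_exists_one_lt p with hsf | hnsf
  · obtain ⟨l, hl⟩ := hP.exists_flat hp
    obtain rfl := eq_sqfreeMonomial hsf hl
    obtain ⟨T, hT, hcard⟩ := hgeo.exists_isLUB_card_eq_rk (atom := atom) h0 hm hat l
    let v : A → ℕ := fun a => if a ∈ T then 1 else 0
    have hv : ∀ a, v a ≤ 1 := fun a => by dsimp [v]; split_ifs <;> omega
    have hsupp : supp v = T := by ext a; by_cases ha : a ∈ T <;> simp [v, ha]
    refine ⟨v, hP.joinP_sqfreeMonomial hv (hsupp ▸ hT), ?_⟩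
    rw [hρ0, sum_eq_card_supp hv, hsupp, hcard]
  · exact ⟨p, (hP.joinP_iff_of_one_lt hnsf).2 ⟨hp, rfl⟩,
      hP.rho_eq_sum h0 hm hat hgeo hρ0 hρs hp hnsf⟩

theorem IsBuiltFrom.exists_gradedJoin_eq_some_iff (h0 : rk ⊥ = 0) (hm : RankStrictMono rk)
    (hat : AtomicRk rk) (hgeo : RankSubmodular rk) (hP : IsBuiltFrom atom P)
    (hρ0 : ∀ l, ρ (sqfreeMonomial atom l) = rk l)
    (hρs : ∀ m ∈ P, ∀ a, m + Pi.single a 1 ∈ P → ρ (m + Pi.single a 1) = ρ m + 1)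
    {p : A → ℕ} {d : ℕ} :
    (∃ v, ∑ a, v a = d ∧ gradedJoin P ρ v = some p) ↔ p ∈ P ∧ ρ p = d := by
  refine ⟨fun ⟨v, hv, hvp⟩ => ?_, fun ⟨hp, hρ⟩ => ?_⟩
  · obtain ⟨hvp, hρ⟩ := gradedJoin_eq_some_iff.1 hvp
    exact ⟨hvp.1, hρ.trans hv⟩
  · obtain ⟨v, hv⟩ := hP.exists_gradedJoin_eq_some h0 hm hat hgeo hρ0 hρs hp
    exact ⟨v, (gradedJoin_eq_some_iff.1 hv).2.symm.trans hρ, hv⟩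

theorem IsBuiltFrom.fiberMap_eq_zero_of_mem_span_generators {k : Type*} [Field k]
    (h0 : rk ⊥ = 0) (hm : RankStrictMono rk) (hat : AtomicRk rk) (hgeo : RankSubmodular rk)
    (hP : IsBuiltFrom atom P) (hρ0 : ∀ l, ρ (sqfreeMonomial atom l) = rk l)
    (hρs : ∀ m ∈ P, ∀ a, m + Pi.single a 1 ∈ P → ρ (m + Pi.single a 1) = ρ m + 1)
    {rexp : A → ℕ} (hrexp : ∀ a, ∀ m ∈ P, m a ≤ rexp a) {x : MvPolynomial A k}
    (hx : x ∈ Ideal.span (generators P ρ rexp k)) :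
    MvPolynomial.fiberMap (fun e : A →₀ ℕ => gradedJoin P ρ e) x = 0 :=
  MvPolynomial.fiberMap_eq_zero_of_mem_span
    (fun u e h => by simpa using hP.gradedJoin_add_eq_none h0 hm hat hgeo hρ0 hρs h u)
    (fun u e f h => by simpa using hP.gradedJoin_add_congr h0 hm hat hgeo hρ0 hρs h u)
    (fun _ hs => generators_cases hrexp hs) hx

end Construction

end Multicomplex

open Multicomplex

theorem generalized_stanley_reisner_dims_general {L : Type*} [SemilatticeInf L]
    [OrderBot L] [Fintype L]
    [DecidableRel (α := L) (· ≤ ·)]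
    (rk : L → ℕ) (h0 : rk ⊥ = 0) (hm : RankStrictMono rk)
    (hat : AtomicRk rk)
    (hgeo : ∀ x y j : L, IsLUB ({x, y} : Set L) j →
      rk (x ⊓ y) + rk j ≤ rk x + rk y)
    -- the variables are indexed by the atoms of `L`
    (A : Type*) [Fintype A] [DecidableEq A] (atom : A ≃ {a : L // rk a = 1})
    -- `mL l` is the square-free monomial supported on the atoms below `l`
    (mL : L → (A → ℕ))
    (hmL : ∀ (l : L) (a : A), mL l a = if (atom a : L) ≤ l then 1 else 0)
    -- the step-by-step construction of `P ∈ 𝒫`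
    (M : ℕ → Set (A → ℕ))
    (hM0 : M 0 = {v | ∃ l : L, v = mL l})
    (hstep : ∀ i : ℕ, M (i + 1) = M i ∨
      ∃ m ∈ M i, ∃ a : A, 0 < m a ∧
        (∀ b : A, 0 < m b → (m + Pi.single a 1 - Pi.single b 1) ∈ M i) ∧
        m + Pi.single a 1 ∉ M i ∧ M (i + 1) = M i ∪ {m + Pi.single a 1})
    (P : Set (A → ℕ)) (hP : P = ⋃ i, M i)
    -- the rank function of `P`
    (ρ : (A → ℕ) → ℕ) (hρ0 : ∀ l : L, ρ (mL l) = rk l)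
    (hρs : ∀ m ∈ P, ∀ a : A,
      m + Pi.single a 1 ∈ P → ρ (m + Pi.single a 1) = ρ m + 1)
    -- `rexp a` is the largest exponent of `x_a` among the monomials of `P`
    (rexp : A → ℕ)
    (hrexp : ∀ a : A, (∀ m ∈ P, m a ≤ rexp a) ∧ ∃ m ∈ P, m a = rexp a)
    (k : Type*) [Field k] :
    ∀ i : ℕ,
      let mono : (A → ℕ) → MvPolynomial A k := fun v =>
        MvPolynomial.monomial (Finsupp.equivFunOnFinite.symm v) (1 : k)
      let gens : Set (MvPolynomial A k) :=
        {x | ∃ v : A → ℕ, (∃ a : A, rexp a < v a) ∧ x = mono v} ∪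
        {x | ∃ v : A → ℕ, (∀ a : A, v a ≤ rexp a) ∧
          (¬ ∃ p : A → ℕ, JoinP P v p) ∧ x = mono v} ∪
        {x | ∃ v : A → ℕ, (∃ p : A → ℕ, JoinP P v p ∧ ρ p ≠ ∑ a : A, v a) ∧
          x = mono v} ∪
        {x | ∃ v w : A → ℕ, (∃ p : A → ℕ, JoinP P v p ∧ JoinP P w p ∧
          ρ p = ∑ a : A, v a ∧ (∑ a : A, v a) = ∑ a : A, w a) ∧
          x = mono v - mono w}
      let I : Ideal (MvPolynomial A k) := Ideal.span gens
      Module.finrank k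
        (Submodule.map (Ideal.Quotient.mkₐ k I).toLinearMap
          (MvPolynomial.homogeneousSubmodule A k (i + 1))) =
        Nat.card {p : A → ℕ | p ∈ P ∧ ρ p = i + 1} := by
  intro i mono gens I
  obtain rfl : mL = sqfreeMonomial atom := by
    funext l a
    by_cases h : (atom a : L) ≤ l <;> simp [hmL, sqfreeMonomial, h]
  have hB : IsBuiltFrom atom P := hP ▸ isBuiltFrom_iUnion hM0 hstep
  have hrexp' : ∀ a, ∀ m ∈ P, m a ≤ rexp a := fun a => (hrexp a).1
  rw [MvPolynomial.finrank_map_homogeneousSubmodule _ I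
    (fun _ => hB.fiberMap_eq_zero_of_mem_span_generators h0 hm hat hgeo hρ0 hρs hrexp')
    (fun _ => monomial_mem_span_generators hrexp')
    (fun _ _ _ => monomial_sub_monomial_mem_span_generators)]
  congr 2
  ext p
  change (∃ e : A →₀ ℕ, e.degree = i + 1 ∧ gradedJoin P ρ e = some p) ↔ p ∈ P ∧ ρ p = i + 1
  rw [← hB.exists_gradedJoin_eq_some_iff h0 hm hat hgeo hρ0 hρs,
    Finsupp.equivFunOnFinite.exists_congr_left]
  simp only [Finsupp.degree_eq_sum, Finsupp.coe_equivFunOnFinite_symm]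

/-- The generalized Stanley–Reisner ring of a finite member `P` of the family `𝒫`
(built from a geometric meet semi-lattice `L` by starting with the square-free
monomials `mL l` and repeatedly adjoining monomials `x_a · m`): the degree-`(i+1)`
graded component of `k[P] = k[x_a : a ∈ A] / (I₀ + I₁ + I₂ + I₃)` has dimension
`f_i(P)`, the number of rank-`(i+1)` elements of `P`. -/
theorem generalized_stanley_reisner_dims {L : Type*} [SemilatticeInf L]
    [OrderBot L] [Fintype L] [DecidableEq L]
    [DecidableRel (α := L) (· ≤ ·)]
    (rk : L → ℕ) (h0 : rk ⊥ = 0) (hc : CoverRank rk) (hm : RankStrictMono rk)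
    (hat : AtomicRk rk)
    (hgeo : ∀ x y j : L, IsLUB ({x, y} : Set L) j →
      rk (x ⊓ y) + rk j ≤ rk x + rk y)
    -- the variables are indexed by the atoms of `L`
    (A : Type*) [Fintype A] [DecidableEq A] (atom : A ≃ {a : L // rk a = 1})
    -- `mL l` is the square-free monomial supported on the atoms below `l`
    (mL : L → (A → ℕ))
    (hmL : ∀ (l : L) (a : A), mL l a = if (atom a : L) ≤ l then 1 else 0)
    -- the step-by-step construction of `P ∈ 𝒫`
    (M : ℕ → Set (A → ℕ))
    (hM0 : M 0 = {v | ∃ l : L, v = mL l})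
    (hstep : ∀ i : ℕ, M (i + 1) = M i ∨
      ∃ m ∈ M i, ∃ a : A, 0 < m a ∧
        (∀ b : A, 0 < m b → (m + Pi.single a 1 - Pi.single b 1) ∈ M i) ∧
        m + Pi.single a 1 ∉ M i ∧ M (i + 1) = M i ∪ {m + Pi.single a 1})
    (P : Set (A → ℕ)) (hP : P = ⋃ i, M i) (hPfin : P.Finite)
    -- the rank function of `P`
    (ρ : (A → ℕ) → ℕ) (hρ0 : ∀ l : L, ρ (mL l) = rk l)
    (hρs : ∀ m ∈ P, ∀ a : A,
      m + Pi.single a 1 ∈ P → ρ (m + Pi.single a 1) = ρ m + 1)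
    -- `rexp a` is the largest exponent of `x_a` among the monomials of `P`
    (rexp : A → ℕ)
    (hrexp : ∀ a : A, (∀ m ∈ P, m a ≤ rexp a) ∧ ∃ m ∈ P, m a = rexp a)
    (k : Type*) [Field k] :
    ∀ i : ℕ,
      let mono : (A → ℕ) → MvPolynomial A k := fun v =>
        MvPolynomial.monomial (Finsupp.equivFunOnFinite.symm v) (1 : k)
      let gens : Set (MvPolynomial A k) :=
        {x | ∃ v : A → ℕ, (∃ a : A, rexp a < v a) ∧ x = mono v} ∪
        {x | ∃ v : A → ℕ, (∀ a : A, v a ≤ rexp a) ∧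
          (¬ ∃ p : A → ℕ, JoinP P v p) ∧ x = mono v} ∪
        {x | ∃ v : A → ℕ, (∃ p : A → ℕ, JoinP P v p ∧ ρ p ≠ ∑ a : A, v a) ∧
          x = mono v} ∪
        {x | ∃ v w : A → ℕ, (∃ p : A → ℕ, JoinP P v p ∧ JoinP P w p ∧
          ρ p = ∑ a : A, v a ∧ (∑ a : A, v a) = ∑ a : A, w a) ∧
          x = mono v - mono w}
      let I : Ideal (MvPolynomial A k) := Ideal.span gens
      Module.finrank k
        (Submodule.map (Ideal.Quotient.mkₐ k I).toLinearMap
          (MvPolynomial.homogeneousSubmodule A k (i + 1))) =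
        Nat.card {p : A → ℕ | p ∈ P ∧ ρ p = i + 1} :=
  generalized_stanley_reisner_dims_general rk h0 hm hat hgeo A atom mL hmL M hM0 hstep P hP ρ hρ0
    hρs rexp hrexp k
end
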